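/- arXiv:1408.5289 — 9 statements merged into one kernel-verified Lean document; each statement's English description precedes it below -/
import Mathlib

section
/- For every natural number N there exists an even 1-3 tree T with at least N vertices such that T contains no leaf-leaf path of length 20. -/
/-- A vertex of a graph is a *leaf* if it has exactly one neighbour. -/
def IsLeafVertex {V : Type} (T : SimpleGraph V) (v : V) : Prop :=
  (T.neighborSet v).ncard = 1

/-- A *1-3 tree* is a finite tree in which every vertex has degree 1 or 3. -/
def IsOneThreeTree {V : Type} (T : SimpleGraph V) : Prop :=
  T.IsTree ∧ ∀ v : V, (T.neighborSet v).ncard = 1 ∨ (T.neighborSet v).ncard = 3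

/-- A tree is *even* if the (unique) path between any two leaves has even length. -/
def IsEvenTree {V : Type} (T : SimpleGraph V) : Prop :=
  ∀ u w : V, IsLeafVertex T u → IsLeafVertex T w → Even (T.dist u w)

/-- `T` has a *leaf-leaf path of length `ℓ`*: a path with `ℓ` edges whose two
endpoints are leaves (for `ℓ = 0` this is a single leaf). -/
def HasLeafLeafPath {V : Type} (T : SimpleGraph V) (ℓ : ℕ) : Prop :=
  ∃ (u w : V) (p : T.Walk u w),
    IsLeafVertex T u ∧ IsLeafVertex T w ∧ p.IsPath ∧ p.length = ℓ

/-!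
Take a spine `0, 1, …, L` with `L = 24 k` and hang from every inner spine vertex `t` a complete
binary tree whose leaves lie `h t` steps below the spine, where `1 ≤ h t ≤ 9`, `h t ≡ t (mod 2)`
and `h` follows a fixed pattern of period `24`; the two ends of the spine are leaves. Every vertex
has degree 1 or 3, all leaves lie at even distance from one end of the spine, so the tree is even,
and leaves hanging from spine vertices `s < t` are at distance `h s + h t + (t - s)`, while leaves
of one binary tree are at distance at most `18`. The pattern makes `h s + h t + (t - s) ≠ 20`, a
finite check modulo `24`.
-/

namespace SimpleGraph

variable {V W : Type*}

section Metric

variable {G : SimpleGraph V} {G' : SimpleGraph W}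

lemma IsTree.length_eq_dist_of_isPath (hG : G.IsTree) {u v : V} {p : G.Walk u v}
    (hp : p.IsPath) : p.length = G.dist u v := by
  obtain ⟨q, hq, hlen⟩ := hG.connected.exists_path_of_dist u v
  have hpq : (⟨p, hp⟩ : G.Path u v) = ⟨q, hq⟩ := (hG.isAcyclic.subsingleton_path u v).elim _ _
  rw [← hlen, congrArg (fun r : G.Path u v => r.1.length) hpq]

lemma Iso.dist_le_dist (e : G ≃g G') (u v : V) : G'.dist (e u) (e v) ≤ G.dist u v := by
  by_cases huv : G.Reachable u v
  · obtain ⟨p, hp⟩ := huv.exists_walk_length_eq_dist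
    simpa [hp] using dist_le (p.map e.toHom)
  · rw [dist_eq_zero_of_not_reachable (Iso.reachable_iff.not.mpr huv)]
    exact Nat.zero_le _

lemma Iso.dist_apply (e : G ≃g G') (u v : V) : G'.dist (e u) (e v) = G.dist u v :=
  le_antisymm (e.dist_le_dist u v) (by simpa using e.symm.dist_le_dist (e u) (e v))

end Metric

def parentGraph (p : V → V) : SimpleGraph V := fromRel fun x y => p x = y

lemma parentGraph_adj {p : V → V} {x y : V} :
    (parentGraph p).Adj x y ↔ x ≠ y ∧ (p x = y ∨ p y = x) :=
  fromRel_adj _ _ _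

lemma mem_edges_parentGraph {p : V → V} {c x y : V} (q : (parentGraph p).Walk x y)
    (hx : ∃ n, p^[n] x = c) (hy : ∀ n, p^[n] y ≠ c) : s(c, p c) ∈ q.edges := by
  induction q with
  | nil =>
    obtain ⟨n, hn⟩ := hx
    exact absurd hn (hy n)
  | @cons a b y hab q ih =>
    rw [Walk.edges_cons, List.mem_cons]
    by_cases hb : ∃ n, p^[n] b = c
    · exact Or.inr (ih hb hy)
    · push Not at hb
      obtain ⟨n, hn⟩ := hx
      obtain ⟨-, hpa | hpb⟩ := parentGraph_adj.mp hab
      · cases n with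
        | zero => exact Or.inl (by rw [← hn, Function.iterate_zero_apply, hpa])
        | succ n => exact absurd (by rwa [Function.iterate_succ_apply, hpa] at hn) (hb n)
      · exact absurd (by rwa [Function.iterate_succ_apply, hpb]) (hb (n + 1))

structure IsParentMap (p : V → V) (r : V) (d : V → ℕ) : Prop where
  map_root : p r = r
  depth_map : ∀ x, x ≠ r → d (p x) + 1 = d x

namespace IsParentMap

variable {p : V → V} {r : V} {d : V → ℕ} {x y : V}

lemma ne_root_of_map_ne (hp : IsParentMap p r d) (hx : p x ≠ x) : x ≠ r := by
  rintro rfl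
  exact hx hp.map_root

lemma map_ne (hp : IsParentMap p r d) (hx : x ≠ r) : p x ≠ x := by
  intro h
  have := hp.depth_map x hx
  rw [h] at this
  omega

lemma adj_map (hp : IsParentMap p r d) (hx : x ≠ r) : (parentGraph p).Adj x (p x) :=
  parentGraph_adj.mpr ⟨(hp.map_ne hx).symm, Or.inl rfl⟩

lemma depth_map_le (hp : IsParentMap p r d) (x : V) : d (p x) ≤ d x := by
  by_cases hx : x = r
  · rw [hx, hp.map_root]
  · have := hp.depth_map x hx
    omega

lemma depth_iterate_le (hp : IsParentMap p r d) (n : ℕ) (x : V) : d (p^[n] x) ≤ d x := by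
  induction n with
  | zero => rfl
  | succ n ih => exact (Function.iterate_succ_apply' p n x ▸ hp.depth_map_le _).trans ih

lemma depth_eq_of_adj (hp : IsParentMap p r d) (h : (parentGraph p).Adj x y) :
    d x = d y + 1 ∨ d y = d x + 1 := by
  obtain ⟨hxy, hpx | hpy⟩ := parentGraph_adj.mp h
  · left
    rw [← hpx, hp.depth_map x (hp.ne_root_of_map_ne (hpx ▸ hxy.symm))]
  · right
    rw [← hpy, hp.depth_map y (hp.ne_root_of_map_ne (hpy ▸ hxy))]

lemma depth_le_depth_add_length (hp : IsParentMap p r d) (q : (parentGraph p).Walk x y) :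
    d x ≤ d y + q.length := by
  induction q with
  | nil => simp
  | cons h q ih =>
    rw [Walk.length_cons]
    have := hp.depth_eq_of_adj h
    omega

lemma even_length_add_depth_add_depth (hp : IsParentMap p r d) (q : (parentGraph p).Walk x y) :
    Even (q.length + d x + d y) := by
  induction q with
  | nil => simp
  | cons h q ih =>
    rw [Walk.length_cons, Nat.even_iff] at *
    have := hp.depth_eq_of_adj h
    omega

lemma reachable_root (hp : IsParentMap p r d) (x : V) : (parentGraph p).Reachable x r := by
  by_cases hx : x = r
  · rw [hx]
  · have := hp.depth_map x hx
    exact (hp.adj_map hx).reachable.trans (hp.reachable_root (p x))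
termination_by d x

lemma connected (hp : IsParentMap p r d) : (parentGraph p).Connected :=
  (connected_iff_exists_forall_reachable _).mpr ⟨r, fun x => (hp.reachable_root x).symm⟩

lemma isAcyclic (hp : IsParentMap p r d) : (parentGraph p).IsAcyclic := by
  rw [isAcyclic_iff_forall_adj_isBridge]
  intro x y hxy
  wlog hpx : p x = y generalizing x y
  · obtain ⟨-, hpx' | hpy⟩ := parentGraph_adj.mp hxy
    · exact absurd hpx' hpx
    · rw [Sym2.eq_swap]
      exact this hxy.symm hpy
  subst hpx
  have hx : x ≠ r := hp.ne_root_of_map_ne (parentGraph_adj.mp hxy).1.symm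
  rw [isBridge_iff_forall_walk_mem_edges]
  refine fun q => mem_edges_parentGraph q ⟨0, rfl⟩ fun n hn => ?_
  have := hp.depth_iterate_le n (p x)
  have := hp.depth_map x hx
  rw [hn] at *
  omega

lemma isTree (hp : IsParentMap p r d) : (parentGraph p).IsTree :=
  ⟨hp.connected, hp.isAcyclic⟩

lemma dist_iterate_le (hp : IsParentMap p r d) (n : ℕ) (x : V) :
    (parentGraph p).dist x (p^[n] x) ≤ n := by
  induction n with
  | zero => simp
  | succ n ih =>
    rw [Function.iterate_succ_apply']
    have hstep : (parentGraph p).dist (p^[n] x) (p (p^[n] x)) ≤ 1 := by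
      by_cases h : p^[n] x = r
      · rw [h, hp.map_root, dist_self]
        exact zero_le_one
      · exact (dist_eq_one_iff_adj.mpr (hp.adj_map h)).le
    have := hp.connected.dist_triangle (u := x) (v := p^[n] x) (w := p (p^[n] x))
    omega

/-- A shortest walk from `x` to `y` passes through `p c`. -/
lemma depth_add_depth_le_dist (hp : IsParentMap p r d) {c : V}
    (hx : ∃ n, p^[n] x = c) (hy : ∀ n, p^[n] y ≠ c) :
    d x + d y ≤ 2 * d (p c) + (parentGraph p).dist x y := by
  classical
  obtain ⟨q, hq⟩ := hp.connected.exists_walk_length_eq_dist x y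
  have hmem := q.snd_mem_support_of_mem_edges (mem_edges_parentGraph q hx hy)
  have hlen := congrArg Walk.length (q.take_spec hmem)
  rw [Walk.length_append] at hlen
  have := hp.depth_le_depth_add_length (q.takeUntil _ hmem)
  have := hp.depth_le_depth_add_length (q.dropUntil _ hmem).reverse
  rw [Walk.length_reverse] at this
  omega

lemma neighborSet_eq_insert (hp : IsParentMap p r d) (hx : x ≠ r) :
    (parentGraph p).neighborSet x = insert (p x) {y | p y = x} := by
  ext y
  rw [mem_neighborSet, parentGraph_adj, Set.mem_insert_iff, Set.mem_ofPred_eq]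
  constructor
  · rintro ⟨-, h | h⟩
    exacts [Or.inl h.symm, Or.inr h]
  · rintro (rfl | hy)
    · exact ⟨(hp.map_ne hx).symm, Or.inl rfl⟩
    · refine ⟨fun hxy => hp.map_ne hx ?_, Or.inr hy⟩
      rwa [← hxy] at hy

lemma ncard_neighborSet [Finite V] (hp : IsParentMap p r d) (hx : x ≠ r) :
    ((parentGraph p).neighborSet x).ncard = {y | p y = x}.ncard + 1 := by
  rw [hp.neighborSet_eq_insert hx, Set.ncard_insert_of_notMem]
  intro (hpp : p (p x) = x)
  have := hp.depth_map_le (p x)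
  have := hp.depth_map x hx
  rw [hpp] at *
  omega

lemma neighborSet_root (hp : IsParentMap p r d) :
    (parentGraph p).neighborSet r = {y | p y = r ∧ y ≠ r} := by
  ext y
  rw [mem_neighborSet, parentGraph_adj, hp.map_root, Set.mem_ofPred_eq]
  constructor
  · rintro ⟨hy, h | h⟩
    exacts [absurd h hy, ⟨h, Ne.symm hy⟩]
  · rintro ⟨h, hy⟩
    exact ⟨Ne.symm hy, Or.inr h⟩

end IsParentMap

end SimpleGraph

theorem Nat.size_div_two_add_one {i : ℕ} (hi : i ≠ 0) : (i / 2).size + 1 = i.size := by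
  conv_rhs => rw [← Nat.bit_decide_mod_two_eq_one_shiftRight_one i]
  rw [Nat.size_bit (by rwa [Nat.bit_decide_mod_two_eq_one_shiftRight_one]), Nat.shiftRight_one]

theorem Nat.lt_two_pow_iff_size_div_two_lt {j n : ℕ} (hj : j / 2 ≠ 0) :
    j < 2 ^ n ↔ (j / 2).size < n := by
  rw [← Nat.size_le, ← Nat.size_div_two_add_one (by omega)]
  omega

namespace BinaryCaterpillar

open SimpleGraph

/-- `⟨t, 0⟩` is the `t`-th vertex of a spine of length `L`; for `i ≠ 0`, `⟨t, i⟩` is node `i`, in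
heap numbering, of a complete binary tree hanging from spine vertex `t` through its node `1`.
Node `i` then lies `i.size` steps below the spine, and the leaves below `t` are at depth `h t`. -/
@[ext]
structure Vertex (L : ℕ) (h : ℕ → ℕ) where
  pos : ℕ
  idx : ℕ
  pos_le : pos ≤ L
  idx_lt : idx < 2 ^ h pos

variable {L : ℕ} {h : ℕ → ℕ}

instance : Finite (Vertex L h) :=
  Finite.of_surjective (fun x : Σ t : Fin (L + 1), Fin (2 ^ h t) => ⟨x.1, x.2, by omega, x.2.2⟩)
    fun x => ⟨⟨⟨x.pos, by have := x.pos_le; omega⟩, ⟨x.idx, x.idx_lt⟩⟩, rfl⟩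

def spine (t : ℕ) (ht : t ≤ L) : Vertex L h := ⟨t, 0, ht, Nat.two_pow_pos _⟩

def root : Vertex L h := spine 0 (Nat.zero_le L)

def parent (x : Vertex L h) : Vertex L h where
  -- at the root, `0 - 1 = 0` makes `parent root = root`
  pos := if x.idx = 0 then x.pos - 1 else x.pos
  idx := x.idx / 2
  pos_le := by have := x.pos_le; split <;> omega
  idx_lt := by
    split
    · simp [*]
    · exact (Nat.div_le_self _ _).trans_lt x.idx_lt

def depth (x : Vertex L h) : ℕ := x.pos + x.idx.size

variable (L h) in
abbrev graph : SimpleGraph (Vertex L h) := parentGraph parent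

lemma parent_eq_iff {x y : Vertex L h} :
    parent y = x ↔ (y.idx ≠ 0 ∧ y.pos = x.pos ∨ y.idx = 0 ∧ y.pos - 1 = x.pos) ∧
      y.idx / 2 = x.idx := by
  rw [Vertex.ext_iff, parent]
  split_ifs <;> simp_all

lemma isParentMap : IsParentMap (parent (L := L) (h := h)) root depth where
  map_root := by ext <;> simp [parent, root, spine]
  depth_map x hx := by
    have hroot : x.idx = 0 → x.pos ≠ 0 := fun hi hp => hx (by ext <;> simp [root, spine, *])
    by_cases hi : x.idx = 0
    · simp only [depth, parent, hi, if_true, Nat.zero_div, Nat.size_zero]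
      have := hroot hi
      omega
    · simp only [depth, parent, hi, if_false]
      rw [add_assoc, Nat.size_div_two_add_one hi]

lemma pos_iterate_parent_le (n : ℕ) (x : Vertex L h) : (parent^[n] x).pos ≤ x.pos := by
  induction n generalizing x with
  | zero => rfl
  | succ n ih =>
    rw [Function.iterate_succ_apply]
    refine (ih _).trans ?_
    simp only [parent]
    split <;> omega

lemma parent_iterate_size_idx (x : Vertex L h) :
    parent^[x.idx.size] x = spine x.pos x.pos_le := by
  induction hn : x.idx.size generalizing x with
  | zero => ext <;> simp [spine, Nat.size_eq_zero.mp hn]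
  | succ n ih =>
    have hi : x.idx ≠ 0 := by rintro hi; simp [hi] at hn
    rw [Function.iterate_succ_apply, ih]
    · simp [parent, hi]
    · simp only [parent]
      have := Nat.size_div_two_add_one hi
      omega

lemma parent_iterate_spine (t : ℕ) (ht : t ≤ L) (c : ℕ) (hc : c ≤ t) :
    parent^[c] (spine t ht : Vertex L h) = spine (t - c) (by omega) := by
  induction c with
  | zero => rfl
  | succ c ih =>
    rw [Function.iterate_succ_apply', ih (by omega)]
    ext <;> simp [parent, spine]
    omega

lemma dist_graph_le (x y : Vertex L h) (hxy : x.pos ≤ y.pos) :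
    (graph L h).dist x y ≤ x.idx.size + y.idx.size + (y.pos - x.pos) := by
  have hx := isParentMap.dist_iterate_le x.idx.size x
  have hy := isParentMap.dist_iterate_le ((y.pos - x.pos) + y.idx.size) y
  rw [parent_iterate_size_idx] at hx
  rw [Function.iterate_add_apply, parent_iterate_size_idx, parent_iterate_spine _ _ _ (by omega)]
    at hy
  have := isParentMap.connected.dist_triangle (u := x) (v := spine x.pos x.pos_le) (w := y)
  simp only [Nat.sub_sub_self hxy] at hy
  rw [dist_comm] at hy
  unfold graph
  omega

lemma depth_spine (t : ℕ) (ht : t ≤ L) : depth (spine t ht : Vertex L h) = t := by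
  simp [depth, spine]

lemma parent_spine_succ (t : ℕ) (ht : t + 1 ≤ L) :
    parent (spine (t + 1) ht : Vertex L h) = spine t (by omega) := by
  ext <;> simp [parent, spine]

lemma dist_graph_eq (x y : Vertex L h) (hxy : x.pos < y.pos) :
    (graph L h).dist x y = x.idx.size + y.idx.size + (y.pos - x.pos) := by
  refine le_antisymm (dist_graph_le x y hxy.le) ?_
  have hc : x.pos + 1 ≤ L := by have := y.pos_le; omega
  have hy : parent^[(y.pos - (x.pos + 1)) + y.idx.size] y = spine (x.pos + 1) hc := by
    rw [Function.iterate_add_apply, parent_iterate_size_idx, parent_iterate_spine _ _ _ (by omega)]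
    ext <;> simp [spine]
    omega
  have hx (n : ℕ) : parent^[n] x ≠ spine (x.pos + 1) hc := fun hn => by
    have := pos_iterate_parent_le n x
    simp [hn, spine] at this
  have := isParentMap.depth_add_depth_le_dist ⟨_, hy⟩ hx
  rw [parent_spine_succ, depth_spine, dist_comm] at this
  simp only [depth] at this
  unfold graph
  omega

lemma parent_ne_of_size_idx_eq {x : Vertex L h} (hx : x.idx ≠ 0) (hs : x.idx.size = h x.pos)
    (y : Vertex L h) : parent y ≠ x := by
  intro hyx
  obtain ⟨⟨-, hpos⟩ | ⟨hy, -⟩, hidx⟩ := parent_eq_iff.mp hyx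
  · have := y.idx_lt
    rw [hpos, Nat.lt_two_pow_iff_size_div_two_lt (by omega), hidx] at this
    omega
  · omega

lemma parent_ne_of_pos_eq (hL : 0 < L) (hhL : h L = 0) {x : Vertex L h} (hx : x.pos = L)
    (y : Vertex L h) : parent y ≠ x := by
  intro hyx
  obtain ⟨⟨hy, hpos⟩ | ⟨-, hpos⟩, -⟩ := parent_eq_iff.mp hyx
  · have := y.idx_lt
    rw [hpos, hx, hhL] at this
    omega
  · have := y.pos_le
    omega

lemma setOf_parent_eq_of_size_idx_lt {x : Vertex L h} (hx : x.idx ≠ 0)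
    (hs : x.idx.size < h x.pos) :
    {y | parent y = x} =
      {⟨x.pos, 2 * x.idx, x.pos_le,
          (Nat.lt_two_pow_iff_size_div_two_lt (by omega)).mpr (by simpa using hs)⟩,
        ⟨x.pos, 2 * x.idx + 1, x.pos_le,
          (Nat.lt_two_pow_iff_size_div_two_lt (by omega)).mpr
            (by simpa [Nat.mul_add_div] using hs)⟩} := by
  ext y
  rw [Set.mem_ofPred_eq, parent_eq_iff]
  simp only [Set.mem_insert_iff, Set.mem_singleton_iff, Vertex.ext_iff]
  omega

lemma setOf_parent_eq_of_idx_eq_zero {x : Vertex L h} (hx : x.idx = 0) (hpos : x.pos ≠ 0)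
    (hlt : x.pos < L) (hh : h x.pos ≠ 0) :
    {y | parent y = x} =
      {⟨x.pos, 1, x.pos_le, Nat.one_lt_two_pow hh⟩, spine (x.pos + 1) hlt} := by
  ext y
  rw [Set.mem_ofPred_eq, parent_eq_iff]
  simp only [Set.mem_insert_iff, Set.mem_singleton_iff, Vertex.ext_iff, spine]
  omega

lemma neighborSet_graph_root (hL : 0 < L) (h0 : h 0 = 0) :
    (graph L h).neighborSet root = {spine 1 hL} := by
  rw [isParentMap.neighborSet_root]
  ext y
  rw [Set.mem_ofPred_eq, parent_eq_iff, Set.mem_singleton_iff]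
  simp only [ne_eq, Vertex.ext_iff, root, spine]
  have := y.idx_lt
  constructor
  · rintro ⟨⟨⟨hi, hpos⟩ | hspine, hidx⟩, hne⟩
    · rw [hpos, h0] at this
      omega
    · omega
  · omega

lemma ncard_neighborSet_graph (hL : 0 < L) (hh : ∀ t ≤ L, h t = 0 ↔ t = 0 ∨ t = L)
    (x : Vertex L h) :
    ((graph L h).neighborSet x).ncard = if x.idx.size = h x.pos then 1 else 3 := by
  by_cases hroot : x = root
  · have h0 := (hh 0 (Nat.zero_le L)).mpr (Or.inl rfl)
    subst hroot
    rw [neighborSet_graph_root hL h0, Set.ncard_singleton]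
    simp [root, spine, h0]
  rw [isParentMap.ncard_neighborSet hroot]
  by_cases hi : x.idx = 0
  · have hpos : x.pos ≠ 0 := fun hpos => hroot (by ext <;> simp [root, spine, hi, hpos])
    by_cases hend : x.pos = L
    · have hhL := (hh L le_rfl).mpr (Or.inr rfl)
      have hnone : {y | parent y = x} = ∅ :=
        Set.eq_empty_iff_forall_notMem.mpr (parent_ne_of_pos_eq hL hhL hend)
      simp [hnone, hi, hend, hhL]
    · have hhx : h x.pos ≠ 0 := fun h0 => by have := (hh x.pos x.pos_le).mp h0; omega
      rw [setOf_parent_eq_of_idx_eq_zero hi hpos (by have := x.pos_le; omega) hhx,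
        Set.ncard_pair (by simp [Vertex.ext_iff, spine])]
      simp [hi, Ne.symm hhx]
  · by_cases hs : x.idx.size = h x.pos
    · have hnone : {y | parent y = x} = ∅ :=
        Set.eq_empty_iff_forall_notMem.mpr (parent_ne_of_size_idx_eq hi hs)
      simp [hnone, hs]
    · have hlt : x.idx.size < h x.pos := lt_of_le_of_ne (Nat.size_le.mpr x.idx_lt) hs
      rw [setOf_parent_eq_of_size_idx_lt hi hlt, Set.ncard_pair (by simp [Vertex.ext_iff])]
      simp [hs]

lemma isOneThreeTree_graph (hL : 0 < L) (hh : ∀ t ≤ L, h t = 0 ↔ t = 0 ∨ t = L) :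
    IsOneThreeTree (graph L h) :=
  ⟨isParentMap.isTree, fun x => by rw [ncard_neighborSet_graph hL hh]; split_ifs <;> simp⟩

lemma isLeafVertex_graph_iff (hL : 0 < L) (hh : ∀ t ≤ L, h t = 0 ↔ t = 0 ∨ t = L) {x : Vertex L h} :
    IsLeafVertex (graph L h) x ↔ x.idx.size = h x.pos := by
  rw [IsLeafVertex, ncard_neighborSet_graph hL hh]
  split_ifs <;> simp [*]

lemma isEvenTree_graph (hL : 0 < L) (hh : ∀ t ≤ L, h t = 0 ↔ t = 0 ∨ t = L)
    (heven : ∀ t ≤ L, Even (t + h t)) : IsEvenTree (graph L h) := by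
  intro u w hu hw
  rw [isLeafVertex_graph_iff hL hh] at hu hw
  obtain ⟨q, hq⟩ := isParentMap.connected.exists_walk_length_eq_dist u w
  have hq' := isParentMap.even_length_add_depth_add_depth q
  have hu' := heven u.pos u.pos_le
  have hw' := heven w.pos w.pos_le
  rw [depth, depth, hq, hu, hw] at hq'
  rw [Nat.even_iff] at *
  unfold graph
  omega

lemma not_hasLeafLeafPath_graph (hL : 0 < L) (hh : ∀ t ≤ L, h t = 0 ↔ t = 0 ∨ t = L) {ℓ : ℕ}
    (hshort : ∀ t ≤ L, 2 * h t < ℓ) (hne : ∀ s t, s < t → t ≤ L → h s + h t + (t - s) ≠ ℓ) :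
    ¬ HasLeafLeafPath (graph L h) ℓ := by
  have key (u w : Vertex L h) (hu : u.idx.size = h u.pos) (hw : w.idx.size = h w.pos)
      (huw : u.pos ≤ w.pos) : (graph L h).dist u w ≠ ℓ := by
    rcases huw.lt_or_eq with hlt | heq
    · rw [dist_graph_eq u w hlt, hu, hw]
      exact hne _ _ hlt w.pos_le
    · have := dist_graph_le u w huw
      have := hshort u.pos u.pos_le
      have : h u.pos = h w.pos := by rw [heq]
      omega
  rintro ⟨u, w, q, hu, hw, hq, hlen⟩
  rw [isLeafVertex_graph_iff hL hh] at hu hw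
  rw [isParentMap.isTree.length_eq_dist_of_isPath hq] at hlen
  rcases le_total u.pos w.pos with huw | hwu
  · exact key u w hu hw huw hlen
  · exact key w u hw hu hwu (dist_comm.trans hlen)

lemma le_natCard_vertex : L + 1 ≤ Nat.card (Vertex L h) := by
  have := Nat.card_le_card_of_injective (fun t : Fin (L + 1) => (spine t (by omega) : Vertex L h))
    fun s t hst => Fin.ext (congrArg Vertex.pos hst)
  simpa using this

end BinaryCaterpillar

section Isomorphism

open SimpleGraph

variable {V W : Type} {G : SimpleGraph V} {G' : SimpleGraph W}

lemma SimpleGraph.Iso.isLeafVertex_apply_iff (e : G ≃g G') {v : V} :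
    IsLeafVertex G' (e v) ↔ IsLeafVertex G v := by
  rw [IsLeafVertex, IsLeafVertex, ← e.image_neighborSet, Set.ncard_image_of_injective _ e.injective]

lemma IsOneThreeTree.map_iso (hG : IsOneThreeTree G) (e : G ≃g G') : IsOneThreeTree G' := by
  refine ⟨e.isTree_iff.mp hG.1, fun v => ?_⟩
  obtain ⟨v, rfl⟩ := e.surjective v
  rw [← e.image_neighborSet, Set.ncard_image_of_injective _ e.injective]
  exact hG.2 v

lemma IsEvenTree.map_iso (hG : IsEvenTree G) (e : G ≃g G') : IsEvenTree G' := by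
  intro u w hu hw
  obtain ⟨u, rfl⟩ := e.surjective u
  obtain ⟨w, rfl⟩ := e.surjective w
  rw [e.isLeafVertex_apply_iff] at hu hw
  rw [e.dist_apply]
  exact hG u w hu hw

lemma HasLeafLeafPath.map_iso {ℓ : ℕ} (hG : HasLeafLeafPath G ℓ) (e : G ≃g G') :
    HasLeafLeafPath G' ℓ := by
  obtain ⟨u, w, p, hu, hw, hp, hlen⟩ := hG
  exact ⟨e u, e w, p.map e.toHom, e.isLeafVertex_apply_iff.mpr hu,
    e.isLeafVertex_apply_iff.mpr hw, hp.map e.injective, by rw [Walk.length_map, hlen]⟩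

end Isomorphism

def heightPattern (t : ℕ) : ℕ :=
  [2, 1, 4, 3, 2, 7, 6, 5, 6, 7, 2, 3, 4, 1, 2, 1, 8, 9, 6, 5, 6, 9, 8, 1].getD (t % 24) 0

def spineHeight (k t : ℕ) : ℕ := if t = 0 ∨ t = 24 * k then 0 else heightPattern t

lemma heightPattern_mod (t : ℕ) : heightPattern (t % 24) = heightPattern t := by
  simp [heightPattern]

lemma heightPattern_spec :
    ∀ r < 24, 0 < heightPattern r ∧ heightPattern r ≤ 9 ∧ heightPattern r % 2 = r % 2 := by
  decide

lemma heightPattern_pos (t : ℕ) : 0 < heightPattern t :=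
  heightPattern_mod t ▸ (heightPattern_spec _ (Nat.mod_lt t (by norm_num))).1

lemma spineHeight_le (k t : ℕ) : spineHeight k t ≤ 9 := by
  unfold spineHeight
  split_ifs
  · norm_num
  · exact heightPattern_mod t ▸ (heightPattern_spec _ (Nat.mod_lt t (by norm_num))).2.1

lemma spineHeight_eq_zero_iff (k t : ℕ) : spineHeight k t = 0 ↔ t = 0 ∨ t = 24 * k := by
  unfold spineHeight
  split_ifs with ht
  · simpa using ht
  · simpa [(heightPattern_pos t).ne'] using ht

lemma even_add_spineHeight (k t : ℕ) : Even (t + spineHeight k t) := by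
  rw [Nat.even_iff]
  unfold spineHeight
  split_ifs with ht
  · omega
  · have := (heightPattern_spec _ (Nat.mod_lt t (by norm_num))).2.2
    rw [heightPattern_mod] at this
    omega

/-- The possible values of `spineHeight k t`; the two ends of the spine sit at multiples of `24`. -/
def heightCandidates (t : ℕ) : List ℕ :=
  if t % 24 = 0 then [0, heightPattern t] else [heightPattern t]

lemma spineHeight_mem_heightCandidates (k t : ℕ) : spineHeight k t ∈ heightCandidates t := by
  unfold spineHeight heightCandidates
  split_ifs <;> simp_all
  omega

lemma heightCandidates_mod (t : ℕ) : heightCandidates (t % 24) = heightCandidates t := by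
  simp [heightCandidates, heightPattern_mod]

lemma add_add_ne_twenty_of_mem_heightCandidates :
    ∀ r < 24, ∀ d ≤ 20, 0 < d →
      ∀ a ∈ heightCandidates r, ∀ b ∈ heightCandidates (r + d), a + b + d ≠ 20 := by
  decide

lemma spineHeight_add_spineHeight_add_sub_ne_twenty (k : ℕ) {s t : ℕ} (hst : s < t) :
    spineHeight k s + spineHeight k t + (t - s) ≠ 20 := by
  by_cases hfar : 20 < t - s
  · omega
  have hs := spineHeight_mem_heightCandidates k s
  have ht := spineHeight_mem_heightCandidates k t
  rw [← heightCandidates_mod] at hs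
  rw [← heightCandidates_mod, show t % 24 = (s % 24 + (t - s)) % 24 by omega,
    heightCandidates_mod] at ht
  exact add_add_ne_twenty_of_mem_heightCandidates _ (Nat.mod_lt s (by norm_num)) _ (by omega)
    (by omega) _ hs _ ht

open SimpleGraph BinaryCaterpillar

/-- For every natural number `N` there exists an even 1-3 tree
`T` with at least `N` vertices such that `T` contains no leaf-leaf path of
length `20`. -/
theorem exists_even_one_three_tree_without_20_path (N : ℕ) :
    ∃ (n : ℕ) (T : SimpleGraph (Fin n)),
      N ≤ n ∧ IsOneThreeTree T ∧ IsEvenTree T ∧ ¬ HasLeafLeafPath T 20 := by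
  set L := 24 * (N + 1)
  have hL : 0 < L := by omega
  have hh (t : ℕ) (_ : t ≤ L) := spineHeight_eq_zero_iff (N + 1) t
  let φ := Iso.map (Finite.equivFin (Vertex L (spineHeight (N + 1))))
    (graph L (spineHeight (N + 1)))
  refine ⟨_, _, ?_, (isOneThreeTree_graph hL hh).map_iso φ,
    (isEvenTree_graph hL hh fun t _ => even_add_spineHeight _ t).map_iso φ, fun hpath => ?_⟩
  · have := le_natCard_vertex (L := L) (h := spineHeight (N + 1))
    omega
  · refine not_hasLeafLeafPath_graph hL hh (fun t _ => ?_)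
      (fun s t hst _ => spineHeight_add_spineHeight_add_sub_ne_twenty _ hst) (hpath.map_iso φ.symm)
    have := spineHeight_le (N + 1) t
    omega
end

section
/- Let T be an even 1-3 tree and k ≥ 1 an integer. The graph G(T) contains a cycle of length 2k+1 if and only if T contains a leaf-leaf path of length 2k−2. -/
/-- The adjacency relation of the graph `G(T)`: two new vertices `x = Sum.inr 0`
and `y = Sum.inr 1` are added to `T`, joined to each other and to every leaf of `T`. -/
def gtAdj {V : Type} (T : SimpleGraph V) : (V ⊕ Fin 2) → (V ⊕ Fin 2) → Prop
  | Sum.inl u, Sum.inl v => T.Adj u v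
  | Sum.inl u, Sum.inr _ => IsLeafVertex T u
  | Sum.inr _, Sum.inl v => IsLeafVertex T v
  | Sum.inr i, Sum.inr j => i ≠ j

/-- The graph `G(T)` obtained from a tree `T` by adding two new vertices `x` and
`y`, the edge `xy`, and all edges from `x` and from `y` to the leaves of `T`. -/
def gtGraph {V : Type} (T : SimpleGraph V) : SimpleGraph (V ⊕ Fin 2) where
  Adj := gtAdj T
  symm := by
    constructor
    rintro (u | i) (v | j) h
    · exact T.adj_symm h
    · exact h
    · exact h
    · exact Ne.symm h
  loopless := by
    constructor
    rintro (u | i) h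
    · exact T.irrefl h
    · exact h rfl

/-- `G` contains a cycle with exactly `ℓ` edges. -/
def HasCycleOfLength {W : Type} (G : SimpleGraph W) (ℓ : ℕ) : Prop :=
  ∃ (v : W) (c : G.Walk v v), c.IsCycle ∧ c.length = ℓ

open SimpleGraph

namespace SimpleGraph.Walk

variable {V W : Type*} {G : SimpleGraph V} {H : SimpleGraph W}

lemma mem_edges_of_colorable_deleteEdges {e : Sym2 V} (hG : (G.deleteEdges {e}).Colorable 2)
    {u : V} (w : G.Walk u u) (hw : Odd w.length) : e ∈ w.edges := by
  by_contra he
  have := two_colorable_iff_forall_loop_even.mp hG u (w.toDeleteEdge e he)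
  rw [length_transfer] at this
  exact Nat.not_even_iff_odd.mpr hw this

lemma IsCycle.snd_eq_or_penultimate_eq {u v : V} {c : G.Walk u u} (hc : c.IsCycle)
    (he : s(u, v) ∈ c.edges) : c.snd = v ∨ c.penultimate = v := by
  obtain ⟨w, h, q, rfl⟩ := not_nil_iff.mp hc.not_nil
  obtain ⟨hq, -⟩ := (cons_isCycle_iff q h).mp hc
  rw [edges_cons, List.mem_cons] at he
  rcases he with he | he
  · left
    rcases Sym2.eq_iff.mp he with ⟨-, rfl⟩ | ⟨rfl, -⟩
    · exact snd_cons q h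
    · exact (h.ne rfl).elim
  · right
    have hq_not_nil : ¬ q.Nil := edges_eq_nil.not.mp (List.ne_nil_of_mem he)
    rw [penultimate_cons_of_not_nil _ _ hq_not_nil]
    exact (hq.eq_penultimate_of_mem_edges he).symm

lemma IsCycle.exists_isPath_of_mem_edges {u a b : V} {c : G.Walk u u} (hc : c.IsCycle)
    (he : s(a, b) ∈ c.edges) : ∃ p : G.Walk a b, p.IsPath ∧ p.length + 1 = c.length := by
  classical
  have tail_of_snd_eq : ∀ d : G.Walk b b, d.IsCycle → d.snd = a →
      ∃ p : G.Walk a b, p.IsPath ∧ p.length + 1 = d.length := fun d hd hda =>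
    ⟨d.tail.copy hda rfl, (isPath_copy _ _ _).mpr hd.isPath_tail,
      by rw [length_copy, length_tail_add_one hd.not_nil]⟩
  have hb : b ∈ c.support := c.snd_mem_support_of_mem_edges he
  have hc' := hc.rotate hb
  have he' : s(b, a) ∈ (c.rotate b hb).edges := by
    rw [(c.rotate_edges b hb).mem_iff, Sym2.eq_swap]
    exact he
  rw [← length_rotate c b hb]
  rcases hc'.snd_eq_or_penultimate_eq he' with h | h
  · exact tail_of_snd_eq _ hc' h
  · simpa using tail_of_snd_eq _ hc'.reverse (by rwa [snd_reverse])

lemma exists_map_eq_of_support_subset_range (f : G ↪g H) {a b : V} (p : H.Walk (f a) (f b))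
    (hp : ∀ x ∈ p.support, x ∈ Set.range f) : ∃ q : G.Walk a b, q.map f.toHom = p := by
  suffices ∀ {s t : W} (p : H.Walk s t), (∀ x ∈ p.support, x ∈ Set.range f) →
      ∀ {a b : V} (ha : f a = s) (hb : f b = t),
        ∃ q : G.Walk a b, (q.map f.toHom).copy ha hb = p by
    simpa using this p hp rfl rfl
  intro s t p
  induction p with
  | nil =>
    intro _ a b ha hb
    obtain rfl := f.injective (ha.trans hb.symm)
    subst ha
    exact ⟨nil, rfl⟩
  | @cons _ v _ h p ih =>
    intro hp a b ha hb
    obtain ⟨c, rfl⟩ := hp v (by simp)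
    obtain ⟨q, hq⟩ := ih (fun x hx => hp x (by simp [hx])) rfl hb
    subst ha hb hq
    exact ⟨cons (f.map_adj_iff.mp h) q, rfl⟩

end SimpleGraph.Walk

lemma SimpleGraph.IsTree.exists_coloring_leaf_eq_zero {V : Type} {T : SimpleGraph V}
    (hT : T.IsTree) (hTe : IsEvenTree T) :
    ∃ c : T.Coloring (Fin 2), ∀ v, IsLeafVertex T v → c v = 0 := by
  by_cases h : ∃ v₀, IsLeafVertex T v₀
  · obtain ⟨v₀, hv₀⟩ := h
    exact ⟨hT.coloringTwoOfVert v₀, fun v hv => Fin.ext <| Nat.even_iff.mp (hTe v₀ v hv₀ hv)⟩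
  · exact ⟨hT.coloringTwo, fun v hv => (h ⟨v, hv⟩).elim⟩

namespace gtGraph

variable {V : Type} {T : SimpleGraph V}

lemma adj_inr_inr {i j : Fin 2} : (gtGraph T).Adj (Sum.inr i) (Sum.inr j) ↔ i ≠ j :=
  Iff.rfl

lemma colorable_deleteEdges (hT : T.IsTree) (hTe : IsEvenTree T) :
    ((gtGraph T).deleteEdges {s(Sum.inr 0, Sum.inr 1)}).Colorable 2 := by
  obtain ⟨c, hc⟩ := hT.exists_coloring_leaf_eq_zero hTe
  refine ⟨Coloring.mk (Sum.elim c fun _ => 1) ?_⟩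
  rintro (u | i) (v | j) ⟨h, hxy⟩
  · exact c.valid h
  · simp [hc u h]
  · simp [hc v h]
  · fin_cases i <;> fin_cases j <;> simp_all

def inlEmbedding (T : SimpleGraph V) : T ↪g gtGraph T :=
  ⟨Function.Embedding.inl, Iff.rfl⟩

lemma hasLeafLeafPath_of_isPath {n : ℕ} (p : (gtGraph T).Walk (Sum.inr 0) (Sum.inr 1))
    (hp : p.IsPath) (hl : p.length = n + 2) : HasLeafLeafPath T n := by
  obtain ⟨_, hx, q, rfl⟩ := Walk.not_nil_iff.mp (Walk.not_nil_of_ne (by simp) : ¬ p.Nil)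
  have hq_not_nil : ¬ q.Nil :=
    Walk.not_nil_iff_lt_length.mpr (by rw [Walk.length_cons] at hl; omega)
  obtain ⟨_, hadj, q', rfl⟩ := Walk.not_nil_iff.mp hq_not_nil
  obtain ⟨_, r, hy, hr⟩ := Walk.exists_cons_eq_concat hadj q'
  rw [hr] at hp hl
  rw [Walk.cons_isPath_iff, Walk.concat_isPath_iff, Walk.support_concat] at hp
  obtain ⟨⟨hr, hy_notMem⟩, hx_notMem⟩ := hp
  have hinl : ∀ z ∈ r.support, z ∈ Set.range (inlEmbedding T) := by
    rintro (z | j) hz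
    · exact ⟨z, rfl⟩
    · fin_cases j <;> simp_all
  obtain ⟨u, rfl⟩ := hinl _ r.start_mem_support
  obtain ⟨w, rfl⟩ := hinl _ r.end_mem_support
  obtain ⟨P, rfl⟩ := Walk.exists_map_eq_of_support_subset_range _ r hinl
  exact ⟨u, w, P, hx, hy, hr.of_map, by simpa using hl⟩

lemma hasCycleOfLength_of_hasLeafLeafPath {n : ℕ} (h : HasLeafLeafPath T n) :
    HasCycleOfLength (gtGraph T) (n + 3) := by
  obtain ⟨u, w, P, hu, hw, hP, rfl⟩ := h
  have hyx : (gtGraph T).Adj (Sum.inr 1) (Sum.inr 0) := adj_inr_inr.mpr (by decide)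
  let f := (inlEmbedding T).toHom
  have hf : ∀ v, f v = Sum.inl v := fun _ => rfl
  -- typed at `f u`, `f w` rather than `Sum.inl u`, `Sum.inl w`, so that `simp` can match `Q`
  have hxu : (gtGraph T).Adj (Sum.inr 0) (f u) := hu
  have hwy : (gtGraph T).Adj (f w) (Sum.inr 1) := hw
  let Q : (gtGraph T).Walk (Sum.inr 0) (Sum.inr 1) := .cons hxu ((P.map f).concat hwy)
  have hQ : Q.IsPath := by
    simp [Q, Walk.cons_isPath_iff, Walk.concat_isPath_iff, hf,
      hP.map (f := f) Sum.inl_injective]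
  refine ⟨_, .cons hyx Q, (Walk.cons_isCycle_iff Q hyx).mpr ⟨hQ, fun he => ?_⟩, by simp [Q]⟩
  have := hQ.length_eq_one_of_mem_edges (Sym2.eq_swap ▸ he)
  simp [Q] at this

end gtGraph

theorem gt_odd_cycle_iff_leaf_path_general {V : Type} (T : SimpleGraph V)
    (hT : IsOneThreeTree T) (hTe : IsEvenTree T) (k : ℕ) (hk : 1 ≤ k) :
    HasCycleOfLength (gtGraph T) (2 * k + 1) ↔ HasLeafLeafPath T (2 * k - 2) := by
  constructor
  · rintro ⟨v, c, hc, hlen⟩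
    have hxy := c.mem_edges_of_colorable_deleteEdges (gtGraph.colorable_deleteEdges hT.1 hTe)
      (hlen ▸ odd_two_mul_add_one k)
    obtain ⟨p, hp, hpl⟩ := hc.exists_isPath_of_mem_edges hxy
    exact gtGraph.hasLeafLeafPath_of_isPath p hp (by omega)
  · intro h
    simpa [show 2 * k - 2 + 3 = 2 * k + 1 by omega] using
      gtGraph.hasCycleOfLength_of_hasLeafLeafPath h

/-- Let `T` be an even 1-3 tree and `k ≥ 1` an integer.  The
graph `G(T)` contains a cycle of length `2k+1` if and only if `T` contains a
leaf-leaf path of length `2k−2`. -/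
theorem gt_odd_cycle_iff_leaf_path {V : Type} [Fintype V] (T : SimpleGraph V)
    (hT : IsOneThreeTree T) (hTe : IsEvenTree T) (k : ℕ) (hk : 1 ≤ k) :
    HasCycleOfLength (gtGraph T) (2 * k + 1) ↔ HasLeafLeafPath T (2 * k - 2) :=
  gt_odd_cycle_iff_leaf_path_general T hT hTe k hk
end

section
/- There exists a 20-avoiding odd-even sequence; that is, there is a function a : ℤ → ℤ with 1 ≤ a(i) ≤ 10 for all i ∈ ℤ, a(i) ≡ i (mod 2) for all i ∈ ℤ, and a(i) + a(j) + |i − j| ≠ 20 for all i ≠ j. -/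
private def taSeq : ℕ → ℤ := fun n =>
  ([2,1,4,3,2,7,6,5,6,7,2,3,4,1,2,1,8,9,6,5,6,9,8,1] : List ℤ).getD n 1

private lemma taSeq_bounds : ∀ r < 24, 1 ≤ taSeq r ∧ taSeq r ≤ 10 ∧
    taSeq r % 2 = (r : ℤ) % 2 := by decide

private lemma taSeq_key : ∀ r < 24, ∀ d < 19, 1 ≤ d →
    taSeq r + taSeq ((r + d) % 24) + (d : ℤ) ≠ 20 := by decide

private lemma taSeq_aux : ∀ i j : ℤ, i < j →
    taSeq (i % 24).toNat + taSeq (j % 24).toNat + (j - i) ≠ 20 := by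
  intro i j hlt
  have hr : (i % 24).toNat < 24 := by omega
  have hs : (j % 24).toNat < 24 := by omega
  obtain ⟨h1i, h2i, -⟩ := taSeq_bounds _ hr
  obtain ⟨h1j, h2j, -⟩ := taSeq_bounds _ hs
  by_cases hd : j - i ≤ 18
  · have hdn : (j - i).toNat < 19 := by omega
    have hdn1 : 1 ≤ (j - i).toNat := by omega
    have hmod : (j % 24).toNat = ((i % 24).toNat + (j - i).toNat) % 24 := by omega
    have := taSeq_key _ hr _ hdn hdn1
    rw [← hmod] at this
    have hcast : ((j - i).toNat : ℤ) = j - i := by omega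
    rw [hcast] at this
    exact this
  · omega

/-- There exists a 20-avoiding odd-even sequence: a function
`a : ℤ → ℤ` with `1 ≤ a i ≤ 10` for all `i`, `a i ≡ i (mod 2)` for all `i`, and
`a i + a j + |i − j| ≠ 20` whenever `i ≠ j`. -/
theorem exists_twenty_avoiding_odd_even_sequence :
    ∃ a : ℤ → ℤ,
      (∀ i : ℤ, 1 ≤ a i ∧ a i ≤ 10) ∧
      (∀ i : ℤ, a i ≡ i [ZMOD 2]) ∧
      (∀ i j : ℤ, i ≠ j → a i + a j + |i - j| ≠ 20) := by
  refine ⟨fun i => taSeq (i % 24).toNat, ?_, ?_, ?_⟩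
  · intro i
    have hr : (i % 24).toNat < 24 := by omega
    obtain ⟨h1, h2, -⟩ := taSeq_bounds _ hr
    exact ⟨h1, h2⟩
  · intro i
    have hr : (i % 24).toNat < 24 := by omega
    obtain ⟨-, -, h3⟩ := taSeq_bounds _ hr
    show taSeq (i % 24).toNat % 2 = i % 2
    omega
  · intro i j hij
    rcases hij.lt_or_gt with h | h
    · have habs : |i - j| = j - i := by rw [abs_sub_comm]; exact abs_of_pos (by omega)
      rw [habs]
      have := taSeq_aux i j h
      intro hc; exact this (by linarith)
    · have habs : |i - j| = i - j := abs_of_pos (by omega)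
      rw [habs]
      have := taSeq_aux j i h
      intro hc; exact this (by linarith)
end

section
/- Let a : ℤ → ℤ be an 18-avoiding odd-even sequence. Then there is no even integer b such that all four lines y = −x + b, y = −x + (b+2), y = −x + (b+4), and y = −x + (b+6) are excluded lines for a. -/
/-- For an even integer `b`, the line `y = −x + b` is an *excluded line* for the
sequence `a` if it contains no point `(i, a i)` of the graph of `a` except
possibly points with second coordinate `9`. -/
def ExcludedLine (a : ℤ → ℤ) (b : ℤ) : Prop :=
  ∀ i : ℤ, i + a i = b → a i = 9

/-- If `a : ℤ → ℤ` is an 18-avoiding odd-even sequence, then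
there is no even integer `b` such that all four lines `y = −x + b`, `y = −x + (b+2)`, `y = −x + (b+4)`, `y = −x + (b+6)` are excluded lines for `a`. -/
theorem stmt_11 (a : ℤ → ℤ)
    (hpos : ∀ i : ℤ, 1 ≤ a i) (hub : ∀ i : ℤ, a i ≤ 9)
    (hoe : ∀ i : ℤ, a i ≡ i [ZMOD 2])
    (havoid : ∀ i j : ℤ, i ≠ j → a i + a j + |i - j| ≠ 18) :
    ¬ ∃ b : ℤ, Even b ∧ ExcludedLine a b ∧ ExcludedLine a (b + 2) ∧ ExcludedLine a (b + 4) ∧ ExcludedLine a (b + 6) := by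
  rintro ⟨b, hb, h0, h2, h4, h6⟩
  obtain ⟨k, hk⟩ := hb
  have hp := hpos (b - 2)
  have hu := hub (b - 2)
  have hm := hoe (b - 2)
  rw [Int.ModEq] at hm
  have e0 := h0 (b - 2)
  have e2 := h2 (b - 2)
  have e4 := h4 (b - 2)
  have e6 := h6 (b - 2)
  omega
end

section
/- Let a : ℤ → ℤ be an 18-avoiding odd-even sequence. Then there is no even integer b such that all three lines y = −x + b, y = −x + (b+2), and y = −x + (b+4) are excluded lines for a. -/
/-- If `a : ℤ → ℤ` is an 18-avoiding odd-even sequence, then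
there is no even integer `b` such that all three lines `y = −x + b`, `y = −x + (b+2)`, `y = −x + (b+4)` are excluded lines for `a`. -/
theorem stmt_12 (a : ℤ → ℤ)
    (hpos : ∀ i : ℤ, 1 ≤ a i) (hub : ∀ i : ℤ, a i ≤ 9)
    (hoe : ∀ i : ℤ, a i ≡ i [ZMOD 2])
    (havoid : ∀ i j : ℤ, i ≠ j → a i + a j + |i - j| ≠ 18) :
    ¬ ∃ b : ℤ, Even b ∧ ExcludedLine a b ∧ ExcludedLine a (b + 2) ∧ ExcludedLine a (b + 4) := by
  rintro ⟨b, ⟨c, hc⟩, h0, h2, h4⟩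
  have av : ∀ i j : ℤ, i < j → a i + a j + (j - i) ≠ 18 := by
    intro i j h
    have h' := havoid i j h.ne
    rwa [abs_sub_comm, abs_of_pos (by omega)] at h'
  have e8 : a (b - 2) = 8 := by
    have p : a (b - 2) % 2 = (b - 2) % 2 := hoe (b - 2)
    have l := hpos (b - 2); have u := hub (b - 2)
    have e0 := h0 (b - 2); have e2 := h2 (b - 2); have e4 := h4 (b - 2)
    omega
  have e7 : a (b - 1) = 7 := by
    have p : a (b - 1) % 2 = (b - 1) % 2 := hoe (b - 1)
    have l := hpos (b - 1); have u := hub (b - 1)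
    have e0 := h0 (b - 1); have e2 := h2 (b - 1); have e4 := h4 (b - 1)
    have := av (b - 2) (b - 1) (by omega)
    omega
  have e6 : a b = 6 := by
    have p : a b % 2 = b % 2 := hoe b
    have l := hpos b; have u := hub b
    have e2 := h2 b; have e4 := h4 b
    have := av (b - 2) b (by omega)
    omega
  have e5 : a (b + 1) = 5 := by
    have p : a (b + 1) % 2 = (b + 1) % 2 := hoe (b + 1)
    have l := hpos (b + 1); have u := hub (b + 1)
    have e2 := h2 (b + 1); have e4 := h4 (b + 1)
    have := av (b - 2) (b + 1) (by omega)
    have := av (b - 1) (b + 1) (by omega)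
    omega
  have p6 : a (b + 6) % 2 = (b + 6) % 2 := hoe (b + 6)
  have l6 := hpos (b + 6); have u6 := hub (b + 6)
  have c1 := av (b - 2) (b + 6) (by omega)
  have c2 := av (b - 1) (b + 6) (by omega)
  have c3 := av b (b + 6) (by omega)
  have c4 := av (b + 1) (b + 6) (by omega)
  omega
end

section
/- Let k be a positive even integer. If there exists a k-avoiding odd-even sequence, then for every integer ℓ ≥ 0 there exists a (k + 2ℓ)-avoiding odd-even sequence. -/
/-- A two-sided sequence of integers is *odd-even* if `a i ≡ i (mod 2)` for all `i`. -/
def IsOddEvenSeq (a : ℤ → ℤ) : Prop :=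
  ∀ i : ℤ, a i ≡ i [ZMOD 2]

/-- For a positive even integer `k`, a two-sided sequence `a : ℤ → ℤ` of positive
integers is *`k`-avoiding* if `a i ≤ k / 2` for all `i` and
`a i + a j + |i − j| ≠ k` for all `i ≠ j`. -/
def IsKAvoiding (k : ℤ) (a : ℤ → ℤ) : Prop :=
  (∀ i : ℤ, 0 < a i) ∧ (∀ i : ℤ, a i ≤ k / 2) ∧
    (∀ i j : ℤ, i ≠ j → a i + a j + |i - j| ≠ k)

/-! Replacing `a` by `i ↦ a (i - ℓ) + ℓ` keeps the parity of every term relative to its index,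
raises the bound `k / 2` by `ℓ`, and raises every sum `a i + a j + |i - j|` by exactly `2 ℓ`. -/

theorem IsOddEvenSeq.shift_add {a : ℤ → ℤ} (h : IsOddEvenSeq a) (ℓ : ℤ) :
    IsOddEvenSeq fun i => a (i - ℓ) + ℓ := fun i => by
  simpa using (h (i - ℓ)).add_right ℓ

theorem IsKAvoiding.shift_add {k : ℤ} {a : ℤ → ℤ} (h : IsKAvoiding k a) {ℓ : ℤ} (hℓ : 0 ≤ ℓ) :
    IsKAvoiding (k + 2 * ℓ) fun i => a (i - ℓ) + ℓ := by
  obtain ⟨hpos, hle, havoid⟩ := h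
  refine ⟨fun i => by linarith [hpos (i - ℓ)], fun i => ?_, fun i j hij hsum => ?_⟩
  · have : (k + 2 * ℓ) / 2 = k / 2 + ℓ := by omega
    linarith [hle (i - ℓ)]
  · have hdist : |i - ℓ - (j - ℓ)| = |i - j| := by rw [sub_sub_sub_cancel_right]
    exact havoid (i - ℓ) (j - ℓ) (by omega) (by linarith)

theorem stepping_up_avoiding_sequences_general (k : ℤ)
    (h : ∃ a : ℤ → ℤ, IsOddEvenSeq a ∧ IsKAvoiding k a) :
    ∀ ℓ : ℤ, 0 ≤ ℓ → ∃ a : ℤ → ℤ, IsOddEvenSeq a ∧ IsKAvoiding (k + 2 * ℓ) a := by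
  obtain ⟨a, hodd, havoid⟩ := h
  exact fun ℓ hℓ => ⟨_, hodd.shift_add ℓ, havoid.shift_add hℓ⟩

/-- Let `k` be a positive even integer.  If there exists a
`k`-avoiding odd-even sequence, then for every integer `ℓ ≥ 0` there exists a
`(k + 2ℓ)`-avoiding odd-even sequence. -/
theorem stepping_up_avoiding_sequences (k : ℤ) (hk : 0 < k) (hke : Even k)
    (h : ∃ a : ℤ → ℤ, IsOddEvenSeq a ∧ IsKAvoiding k a) :
    ∀ ℓ : ℤ, 0 ≤ ℓ → ∃ a : ℤ → ℤ, IsOddEvenSeq a ∧ IsKAvoiding (k + 2 * ℓ) a :=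
  stepping_up_avoiding_sequences_general k h
end

section
/- Let G be a degree 3-critical graph on n ≥ 4 vertices. Then there is an ordering x₁, x₂, …, x_n of the vertices of G such that, writing d⁺(x_i) for the number of neighbours of x_i among {x_{i+1}, …, x_n}: (i) d⁺(x₁) = 3; (ii) d⁺(x_i) = 2 for all i with 2 ≤ i ≤ n−2; (iii) d⁺(x_{n−1}) = 1; and (iv) if n ≥ 7, then the degree of x_n in G is at least 4. -/
/-- A finite simple graph `G` on `n` vertices is *degree 3-critical* if it has
exactly `2n − 2` edges and no proper induced subgraph of minimum degree 3:
for every nonempty vertex set `S` strictly contained in the vertex set, the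
induced subgraph `G[S]` has a vertex with at most 2 neighbours inside `S`. -/
def DegreeThreeCritical {V : Type} [Fintype V] (G : SimpleGraph V) : Prop :=
  G.edgeSet.ncard = 2 * Fintype.card V - 2 ∧
  ∀ S : Set V, S ⊂ Set.univ → S.Nonempty →
    ∃ v ∈ S, ({u | u ∈ S ∧ G.Adj v u}).ncard ≤ 2

/-- The *forward degree* of the vertex in position `i` of the ordering `x`:
the number of its neighbours among the later vertices `x_{i+1}, …, x_n`. -/
noncomputable def forwardDegree {V : Type} {n : ℕ} (G : SimpleGraph V) (x : Fin n ≃ V)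
    (i : Fin n) : ℕ :=
  ({j : Fin n | i < j ∧ G.Adj (x i) (x j)}).ncard

/-!
Peeling off a vertex with at most two neighbours in the current set shows that a proper vertex
set `S` with `|S| ≥ 2` spans at most `2|S| − 3` edges. Hence every vertex has degree at least 3,
and as the degrees add up to `4n − 4`, some vertex `v₀` has degree exactly 3. Peeling `V \ {v₀}`
orders it so that every vertex has at most two later neighbours; for `n ≥ 5` the peeling can
keep a vertex of degree `≥ 4` until the end. Otherwise we would reach a set `S` all of whose
vertices but one, `w`, have degree 3 and all their neighbours inside `S`; then every edge lies
in `S` or in `(V \ S) ∪ {w}`, and there are at most `2n − 4` edges.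

With `v₀` in front, the forward degrees are bounded by `3, 2, …, 2, 1, 0`. These bounds add up to
`2n − 2`, the number of edges, which is also the sum of all forward degrees, so each is attained.
-/

open Finset

lemma Finset.sum_range_min_two (m : ℕ) : ∑ i ∈ range (m + 2), min 2 i = 2 * m + 1 := by
  induction m with
  | zero => simp [sum_range_succ]
  | succ m ih => rw [sum_range_succ, ih]; omega

lemma Finset.sum_range_ite_min_two {n : ℕ} (hn : 4 ≤ n) :
    ∑ i ∈ range n, (if i = 0 then 3 else min 2 (n - 1 - i)) = 2 * n - 2 := by
  obtain ⟨m, rfl⟩ : ∃ m, n = m + 3 := ⟨n - 3, by omega⟩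
  rw [sum_range_succ', if_pos rfl]
  simp only [Nat.add_one_ne_zero, if_false, show ∀ i, m + 3 - 1 - (i + 1) = m + 2 - 1 - i by omega]
  rw [sum_range_reflect (min 2), sum_range_min_two]
  omega

namespace List

variable {α : Type*} {n : ℕ} {l : List α}

lemma Nodup.exists_equiv_getElem? (hnd : l.Nodup) (hmem : ∀ a, a ∈ l) (hlen : l.length = n) :
    ∃ x : Fin n ≃ α, ∀ i : Fin n, l[(i : ℕ)]? = some (x i) := by
  classical
  subst hlen
  exact ⟨hnd.getEquivOfForallMemList l hmem, fun i => by simp⟩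

variable {x : Fin n ≃ α} (hlen : l.length = n) (hx : ∀ i : Fin n, l[(i : ℕ)]? = some (x i))
include hlen hx

lemma getElem?_eq_some_iff_eq_symm {k : ℕ} {a : α} : l[k]? = some a ↔ k = x.symm a := by
  constructor
  · intro hk
    have hkn : k < n := hlen ▸ (getElem?_eq_some_iff.mp hk).1
    have hxk : x ⟨k, hkn⟩ = a := Option.some_injective _ ((hx ⟨k, hkn⟩).symm.trans hk)
    simp [← hxk]
  · rintro rfl
    simpa using hx (x.symm a)

lemma mem_drop_iff_le_symm {m : ℕ} {a : α} : a ∈ l.drop m ↔ m ≤ x.symm a := by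
  simp only [mem_iff_getElem?, getElem?_drop, getElem?_eq_some_iff_eq_symm hlen hx]
  exact ⟨fun ⟨j, hj⟩ => by omega, fun h => ⟨x.symm a - m, by omega⟩⟩

end List

namespace SimpleGraph

section Counting

variable {V : Type*} {G : SimpleGraph V} [DecidableRel G.Adj]

variable (G) in
def degreeIn (S : Finset V) (v : V) : ℕ := #{u ∈ S | G.Adj v u}

variable (G) in
def edgesIn (S : Finset V) : ℕ := #{e ∈ S.sym2 | e ∈ G.edgeSet}

lemma degreeIn_le_card (S : Finset V) (v : V) : G.degreeIn S v ≤ #S :=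
  card_filter_le _ _

@[simp]
lemma degreeIn_erase_self [DecidableEq V] (S : Finset V) (v : V) :
    G.degreeIn (S.erase v) v = G.degreeIn S v := by
  simp only [degreeIn, filter_erase]
  exact congrArg card (erase_eq_of_notMem (by simp))

@[simp]
lemma degreeIn_univ [Fintype V] (v : V) : G.degreeIn univ v = G.degree v := by
  rw [degreeIn, ← card_neighborFinset_eq_degree]
  congr 1
  ext u
  simp

lemma mem_of_adj_of_degree_le_degreeIn [Fintype V] {S : Finset V} {u v : V}
    (h : G.degree v ≤ G.degreeIn S v) (huv : G.Adj v u) : u ∈ S := by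
  have hsub : {w ∈ S | G.Adj v w} ⊆ G.neighborFinset v := fun w hw => by simp_all
  have heq := eq_of_subset_of_card_le hsub (by rwa [card_neighborFinset_eq_degree])
  have hu : u ∈ G.neighborFinset v := by simpa using huv
  rw [← heq] at hu
  exact (mem_filter.mp hu).1

lemma edgesIn_insert [DecidableEq V] {S : Finset V} {v : V} (hv : v ∉ S) :
    G.edgesIn (insert v S) = G.degreeIn S v + G.edgesIn S := by
  have hdisj : Disjoint ((insert v S).image fun u => s(v, u)) S.sym2 := by
    simp only [Finset.disjoint_left, mem_image, mem_sym2_iff]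
    rintro _ ⟨u, -, rfl⟩ h
    exact hv (h v (Sym2.mem_mk_left v u))
  have hstar : {e ∈ (insert v S).image (fun u => s(v, u)) | e ∈ G.edgeSet} =
      {u ∈ S | G.Adj v u}.image fun u => s(v, u) := by
    ext e
    simp only [mem_filter, mem_image, mem_insert]
    constructor
    · rintro ⟨⟨u, rfl | hu, rfl⟩, he⟩
      · exact absurd he (by simp)
      · exact ⟨u, ⟨hu, he⟩, rfl⟩
    · rintro ⟨u, ⟨hu, he⟩, rfl⟩
      exact ⟨⟨u, Or.inr hu, rfl⟩, he⟩
  rw [edgesIn, sym2_insert, filter_union, card_union_of_disjoint (disjoint_filter_filter hdisj),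
    hstar, card_image_of_injective _ (fun _ _ => Sym2.congr_right.mp), ← degreeIn, ← edgesIn]

lemma edgesIn_eq_degreeIn_add_edgesIn_erase [DecidableEq V] {S : Finset V} {v : V}
    (hv : v ∈ S) : G.edgesIn S = G.degreeIn S v + G.edgesIn (S.erase v) := by
  conv_lhs => rw [← insert_erase hv]
  rw [edgesIn_insert (notMem_erase v S), degreeIn_erase_self]

@[simp]
lemma edgesIn_singleton (v : V) : G.edgesIn {v} = 0 := by
  simp [edgesIn]

lemma edgesIn_univ [Fintype V] : G.edgesIn univ = #G.edgeFinset := by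
  rw [edgesIn, sym2_univ]
  congr 1
  ext e
  simp

lemma card_edgeFinset_le_edgesIn_add_edgesIn [Fintype V] [DecidableEq V] {S T : Finset V}
    (h : ∀ e ∈ G.edgeSet, e ∈ S.sym2 ∨ e ∈ T.sym2) :
    #G.edgeFinset ≤ G.edgesIn S + G.edgesIn T := by
  rw [← edgesIn_univ]
  refine (card_le_card fun e he => ?_).trans (card_union_le _ _)
  have he' := (mem_filter.mp he).2
  rcases h e he' with hS | hT
  · exact mem_union_left _ (mem_filter.mpr ⟨hS, he'⟩)
  · exact mem_union_right _ (mem_filter.mpr ⟨hT, he'⟩)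

lemma exists_four_le_degree [Fintype V] (hE : #G.edgeFinset = 2 * Fintype.card V - 2)
    (hn : 5 ≤ Fintype.card V) : ∃ v, 4 ≤ G.degree v := by
  by_contra! h
  have hsum := sum_degrees_eq_twice_card_edges G
  have : ∑ v, G.degree v ≤ Fintype.card V * 3 := by
    simpa using sum_le_card_nsmul univ _ 3 fun v _ => Nat.le_of_lt_succ (h v)
  omega

end Counting

section DegenerateOrder

variable {V : Type*} {G : SimpleGraph V} [DecidableEq V] [DecidableRel G.Adj] {k : ℕ}

variable (G) in
def IsDegenerateOrder (k : ℕ) (l : List V) : Prop :=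
  ∀ v t, v :: t <:+ l → G.degreeIn t.toFinset v ≤ k

lemma isDegenerateOrder_nil : G.IsDegenerateOrder k [] :=
  fun _ _ h => absurd h.length_le (by simp)

lemma IsDegenerateOrder.cons {l : List V} {v : V} (hl : G.IsDegenerateOrder k l)
    (hv : G.degreeIn l.toFinset v ≤ k) : G.IsDegenerateOrder k (v :: l) := by
  intro a t h
  rcases List.suffix_cons_iff.mp h with h | h
  · obtain ⟨rfl, rfl⟩ := List.cons_eq_cons.mp h
    exact hv
  · exact hl a t h

lemma IsDegenerateOrder.cons_of_erase {l : List V} {S : Finset V} {v : V} (hv : v ∈ S)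
    (hdeg : G.degreeIn S v ≤ k) (hnd : l.Nodup) (hl : l.toFinset = S.erase v)
    (hord : G.IsDegenerateOrder k l) :
    (v :: l).Nodup ∧ (v :: l).toFinset = S ∧ G.IsDegenerateOrder k (v :: l) := by
  refine ⟨List.nodup_cons.mpr ⟨?_, hnd⟩, by simp [hl, hv], hord.cons (by simpa [hl])⟩
  rw [← List.mem_toFinset, hl]
  exact notMem_erase v S

end DegenerateOrder

section ProperSubgraphsDegenerate

variable {V : Type*} {G : SimpleGraph V} [Fintype V] [DecidableEq V] [DecidableRel G.Adj]

variable (G) in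
def ProperSubgraphsDegenerate (k : ℕ) : Prop :=
  ∀ S : Finset V, S ⊂ univ → S.Nonempty → ∃ v ∈ S, G.degreeIn S v ≤ k

namespace ProperSubgraphsDegenerate

lemma exists_isDegenerateOrder {k : ℕ} (hG : G.ProperSubgraphsDegenerate k) {S : Finset V}
    (hS : S ⊂ univ) : ∃ l : List V, l.Nodup ∧ l.toFinset = S ∧ G.IsDegenerateOrder k l := by
  induction S using Finset.strongInduction with
  | H S ih =>
    obtain rfl | hne := S.eq_empty_or_nonempty
    · exact ⟨[], List.nodup_nil, rfl, isDegenerateOrder_nil⟩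
    obtain ⟨v, hv, hdeg⟩ := hG S hS hne
    obtain ⟨l, hnd, hl, hord⟩ := ih _ (erase_ssubset hv) ((erase_subset v S).trans_ssubset hS)
    exact ⟨v :: l, hord.cons_of_erase hv hdeg hnd hl⟩

lemma edgesIn_add_three_le (hG : G.ProperSubgraphsDegenerate 2) {S : Finset V}
    (hS : S ⊂ univ) (hcard : 2 ≤ #S) : G.edgesIn S + 3 ≤ 2 * #S := by
  induction S using Finset.strongInduction with
  | H S ih =>
    obtain ⟨v, hv, hdeg⟩ := hG S hS (card_pos.mp (by omega))
    have hsplit := edgesIn_eq_degreeIn_add_edgesIn_erase (G := G) hv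
    have hcard' := card_erase_of_mem hv
    have hdeg' : G.degreeIn S v ≤ #S - 1 := by
      simpa [hcard'] using degreeIn_le_card (G := G) (S.erase v) v
    obtain h2 | h3 := eq_or_lt_of_le hcard
    · obtain ⟨u, hu⟩ := card_eq_one.mp (hcard'.trans (by omega))
      rw [hu, edgesIn_singleton] at hsplit
      omega
    · have := ih (S.erase v) (erase_ssubset hv) ((erase_subset v S).trans_ssubset hS) (by omega)
      omega

variable (hG : G.ProperSubgraphsDegenerate 2) (hE : #G.edgeFinset = 2 * Fintype.card V - 2)
include hG hE

lemma three_le_degree (hn : 3 ≤ Fintype.card V) (v : V) : 3 ≤ G.degree v := by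
  have hsplit := edgesIn_eq_degreeIn_add_edgesIn_erase (G := G) (mem_univ v)
  have hcard : #(univ.erase v) = Fintype.card V - 1 := by simp
  have := hG.edgesIn_add_three_le (erase_ssubset (mem_univ v)) (by omega)
  rw [edgesIn_univ, hE, degreeIn_univ] at hsplit
  omega

lemma exists_degree_eq_three (hn : 3 ≤ Fintype.card V) : ∃ v, G.degree v = 3 := by
  by_contra! h
  have hsum := sum_degrees_eq_twice_card_edges G
  have h4 (v : V) : 4 ≤ G.degree v := (hG.three_le_degree hE hn v).lt_of_ne (h v).symm
  have : Fintype.card V * 4 ≤ ∑ v, G.degree v := by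
    simpa using card_nsmul_le_sum univ _ 4 fun v _ => h4 v
  omega

lemma exists_mem_erase_degreeIn_lt_three {S : Finset V} (hS : S ⊂ univ) (hcard : 2 ≤ #S)
    {w : V} (hw : w ∈ S) (hsmall : ∀ v ∈ S.erase w, G.degree v ≤ 3) :
    ∃ v ∈ S.erase w, G.degreeIn S v < 3 := by
  by_contra! hdense
  have hclosed : ∀ v ∈ S.erase w, ∀ u, G.Adj v u → u ∈ S := fun v hv u huv =>
    mem_of_adj_of_degree_le_degreeIn ((hsmall v hv).trans (hdense v hv)) huv
  set T := insert w Sᶜ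
  have hmemT : ∀ u ∉ S.erase w, u ∈ T := fun u hu => by
    simp only [T, mem_erase, mem_insert, mem_compl] at hu ⊢
    tauto
  have hcover : ∀ e ∈ G.edgeSet, e ∈ S.sym2 ∨ e ∈ T.sym2 := by
    refine Sym2.ind fun a b hab => ?_
    have hab : G.Adj a b := hab
    by_cases ha : a ∈ S.erase w
    · exact .inl (mk_mem_sym2_iff.mpr ⟨mem_of_mem_erase ha, hclosed a ha b hab⟩)
    by_cases hb : b ∈ S.erase w
    · exact .inl (mk_mem_sym2_iff.mpr ⟨hclosed b hb a hab.symm, mem_of_mem_erase hb⟩)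
    exact .inr (mk_mem_sym2_iff.mpr ⟨hmemT a ha, hmemT b hb⟩)
  obtain ⟨v, hv⟩ : (S.erase w).Nonempty := card_pos.mp (by rw [card_erase_of_mem hw]; omega)
  have hT : T ⊂ univ := ssubset_univ_iff.mpr fun h => by
    have hvT := h ▸ mem_univ v
    simp only [T, mem_insert, mem_compl] at hvT
    rw [mem_erase] at hv
    tauto
  have hSn : #S < Fintype.card V := card_univ (α := V) ▸ card_lt_card hS
  have hTcard : #T = Fintype.card V - #S + 1 := by
    rw [card_insert_of_notMem (by simpa), card_compl]
  have hSE := hG.edgesIn_add_three_le hS hcard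
  have hTE := hG.edgesIn_add_three_le hT (by omega)
  have := card_edgeFinset_le_edgesIn_add_edgesIn hcover
  omega

lemma exists_degreeIn_le_two_of_four_le_degree {S : Finset V} (hS : S ⊂ univ) (hcard : 2 ≤ #S)
    {b : V} (hb : b ∈ S) (hbig : 4 ≤ G.degree b) :
    ∃ v ∈ S, G.degreeIn S v ≤ 2 ∧ ∃ c ∈ S.erase v, 4 ≤ G.degree c := by
  obtain ⟨v, hv, hdeg⟩ := hG S hS ⟨b, hb⟩
  by_cases hhigh : ∃ c ∈ S.erase v, 4 ≤ G.degree c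
  · exact ⟨v, hv, hdeg, hhigh⟩
  push Not at hhigh
  obtain rfl : b = v := by
    by_contra hbv
    have := hhigh b (mem_erase.mpr ⟨hbv, hb⟩)
    omega
  obtain ⟨u, hu, hdegu⟩ := hG.exists_mem_erase_degreeIn_lt_three hE hS hcard hb
    fun u hu => Nat.le_of_lt_succ (hhigh u hu)
  exact ⟨u, mem_of_mem_erase hu, by omega, b, mem_erase.mpr ⟨(ne_of_mem_erase hu).symm, hb⟩, hbig⟩

lemma exists_isDegenerateOrder_four_le_degree_getLast {S : Finset V} (hS : S ⊂ univ) {b : V}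
    (hb : b ∈ S) (hbig : 4 ≤ G.degree b) :
    ∃ l : List V, l.Nodup ∧ l.toFinset = S ∧ G.IsDegenerateOrder 2 l ∧
      ∃ c ∈ l.getLast?, 4 ≤ G.degree c := by
  induction S using Finset.strongInduction generalizing b with
  | H S ih =>
    by_cases hcard : #S < 2
    · obtain rfl : S = {b} := eq_singleton_iff_unique_mem.mpr
        ⟨hb, fun u hu => card_le_one.mp (by omega) u hu b hb⟩
      exact ⟨[b], List.nodup_singleton b, by simp,
        isDegenerateOrder_nil.cons (by simp [degreeIn]), b, rfl, hbig⟩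
    obtain ⟨v, hv, hdeg, c, hc, hcbig⟩ :=
      hG.exists_degreeIn_le_two_of_four_le_degree hE hS (by omega) hb hbig
    obtain ⟨l, hnd, hl, hord, d, hd, hdbig⟩ :=
      ih _ (erase_ssubset hv) ((erase_subset v S).trans_ssubset hS) hc hcbig
    obtain ⟨hnd', hl', hord'⟩ := hord.cons_of_erase hv hdeg hnd hl
    refine ⟨v :: l, hnd', hl', hord', d, ?_, hdbig⟩
    simp [List.getLast?_cons, Option.mem_def.mp hd]

lemma exists_degree_eq_three_isDegenerateOrder_erase (hn : 4 ≤ Fintype.card V) :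
    ∃ v₀ l, G.degree v₀ = 3 ∧ l.Nodup ∧ l.toFinset = univ.erase v₀ ∧ G.IsDegenerateOrder 2 l ∧
      (5 ≤ Fintype.card V → ∃ c ∈ l.getLast?, 4 ≤ G.degree c) := by
  obtain ⟨v₀, hv₀⟩ := hG.exists_degree_eq_three hE (by omega)
  have hS : univ.erase v₀ ⊂ univ := erase_ssubset (mem_univ v₀)
  by_cases h5 : 5 ≤ Fintype.card V
  · obtain ⟨b, hb⟩ := exists_four_le_degree hE h5
    have hbS : b ∈ univ.erase v₀ := mem_erase.mpr ⟨by rintro rfl; omega, mem_univ b⟩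
    obtain ⟨l, hnd, hl, hord, hlast⟩ :=
      hG.exists_isDegenerateOrder_four_le_degree_getLast hE hS hbS hb
    exact ⟨v₀, l, hv₀, hnd, hl, hord, fun _ => hlast⟩
  · obtain ⟨l, hnd, hl, hord⟩ := hG.exists_isDegenerateOrder hS
    exact ⟨v₀, l, hv₀, hnd, hl, hord, fun h => absurd h h5⟩

end ProperSubgraphsDegenerate

end ProperSubgraphsDegenerate

section ForwardDegree

variable {V : Type} {G : SimpleGraph V} [DecidableRel G.Adj] {n : ℕ} {x : Fin n ≃ V}

lemma forwardDegree_eq_card (x : Fin n ≃ V) (i : Fin n) :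
    forwardDegree G x i = #{j | i < j ∧ G.Adj (x i) (x j)} := by
  rw [forwardDegree, ← Set.ncard_coe_finset, coe_filter]
  simp

lemma forwardDegree_le (x : Fin n ≃ V) (i : Fin n) : forwardDegree G x i ≤ n - 1 - i := by
  rw [forwardDegree_eq_card, ← Fin.card_Ioi]
  exact card_le_card fun j hj => by simpa using (mem_filter.mp hj).2.1

lemma sum_forwardDegree [Fintype V] (x : Fin n ≃ V) :
    ∑ i, forwardDegree G x i = #G.edgeFinset := by
  simp only [forwardDegree_eq_card]
  rw [← card_sigma]
  refine card_bij (fun p _ => s(x p.1, x p.2)) ?_ ?_ ?_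
  · intro p hp
    simpa using (mem_filter.mp (mem_sigma.mp hp).2).2.2
  · rintro ⟨a, b⟩ hab ⟨c, d⟩ hcd h
    simp only [mem_sigma, mem_filter, mem_univ, true_and] at hab hcd
    rcases Sym2.eq_iff.mp h with ⟨h1, h2⟩ | ⟨h1, h2⟩
    · simp_all
    · have := x.injective h1
      have := x.injective h2
      subst_vars
      exact absurd (hab.1.trans hcd.1) (lt_irrefl _)
  · refine fun e he => Sym2.ind (fun u w he => ?_) e he
    have huw : G.Adj u w := by simpa using he
    obtain h | h := lt_or_gt_of_ne (x.symm.injective.ne huw.ne)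
    · exact ⟨⟨x.symm u, x.symm w⟩, by simp [h, huw], by simp⟩
    · exact ⟨⟨x.symm w, x.symm u⟩, by simp [h, huw.symm], by simp [Sym2.eq_swap]⟩

lemma forwardDegree_eq_of_sum_eq (hn : 4 ≤ n)
    (h0 : ∀ i : Fin n, (i : ℕ) = 0 → forwardDegree G x i ≤ 3)
    (hle : ∀ i : Fin n, 1 ≤ (i : ℕ) → forwardDegree G x i ≤ 2)
    (hsum : ∑ i, forwardDegree G x i = 2 * n - 2) (i : Fin n) :
    forwardDegree G x i = if (i : ℕ) = 0 then 3 else min 2 (n - 1 - i) := by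
  have hb : ∀ j ∈ univ, forwardDegree G x j ≤ if (j : ℕ) = 0 then 3 else min 2 (n - 1 - j) :=
    fun j _ => by
      have := forwardDegree_le (G := G) x j
      split_ifs with hj
      · exact h0 j hj
      · exact le_min (hle j (by omega)) this
  refine (sum_eq_sum_iff_of_le hb).mp (hsum.trans ?_) i (mem_univ i)
  rw [Fin.sum_univ_eq_sum_range (fun j => if j = 0 then 3 else min 2 (n - 1 - j)),
    sum_range_ite_min_two hn]

variable [DecidableEq V] {l : List V} (hlen : l.length = n)
  (hx : ∀ i : Fin n, l[(i : ℕ)]? = some (x i))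
include hlen hx

lemma forwardDegree_eq_degreeIn_drop (i : Fin n) :
    forwardDegree G x i = G.degreeIn (l.drop (i + 1)).toFinset (x i) := by
  rw [forwardDegree_eq_card, degreeIn, ← card_map x.toEmbedding]
  congr 1
  ext u
  simp only [mem_map_equiv, mem_filter, List.mem_toFinset, mem_univ, true_and,
    List.mem_drop_iff_le_symm hlen hx, Equiv.apply_symm_apply, Fin.lt_def, Nat.succ_le_iff]

lemma IsDegenerateOrder.forwardDegree_le {k m : ℕ} (hord : G.IsDegenerateOrder k (l.drop m))
    {i : Fin n} (hi : m ≤ i) : forwardDegree G x i ≤ k := by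
  rw [forwardDegree_eq_degreeIn_drop hlen hx]
  refine hord _ _ ?_
  have hdrop : l.drop i = x i :: l.drop (i + 1) := by
    obtain ⟨hil, hxi⟩ := List.getElem?_eq_some_iff.mp (hx i)
    rw [List.drop_eq_getElem_cons hil, hxi]
  rw [← hdrop, ← Nat.add_sub_cancel' hi, ← List.drop_drop]
  exact List.drop_suffix _ _

end ForwardDegree

lemma ProperSubgraphsDegenerate.exists_ordering {V : Type} {G : SimpleGraph V} [Fintype V]
    [DecidableEq V] [DecidableRel G.Adj] (hG : G.ProperSubgraphsDegenerate 2)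
    (hE : #G.edgeFinset = 2 * Fintype.card V - 2) (hn : 4 ≤ Fintype.card V) :
    ∃ x : Fin (Fintype.card V) ≃ V,
      (∀ i : Fin (Fintype.card V), (i : ℕ) = 0 → forwardDegree G x i = 3) ∧
      (∀ i : Fin (Fintype.card V), 1 ≤ (i : ℕ) → forwardDegree G x i ≤ 2) ∧
      (5 ≤ Fintype.card V → ∀ i : Fin (Fintype.card V), (i : ℕ) = Fintype.card V - 1 →
        4 ≤ G.degree (x i)) := by
  obtain ⟨v₀, l, hv₀, hnd, hl, hord, hlast⟩ :=
    hG.exists_degree_eq_three_isDegenerateOrder_erase hE hn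
  have hmem (v : V) : v ∈ v₀ :: l := by
    by_cases hv : v = v₀ <;> simp [hv, ← List.mem_toFinset, hl]
  have hnd' : (v₀ :: l).Nodup := List.nodup_cons.mpr ⟨by simp [← List.mem_toFinset, hl], hnd⟩
  have hlen : (v₀ :: l).length = Fintype.card V := by
    rw [← List.toFinset_card_of_nodup hnd',
      eq_univ_of_forall fun v => List.mem_toFinset.mpr (hmem v), card_univ]
  obtain ⟨x, hx⟩ := hnd'.exists_equiv_getElem? hmem hlen
  refine ⟨x, fun i hi => ?_, fun i hi => hord.forwardDegree_le (m := 1) hlen hx hi,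
    fun h5 i hi => ?_⟩
  · have hxi : x i = v₀ := by simpa [hi] using (hx i).symm
    rw [forwardDegree_eq_degreeIn_drop hlen hx, hi, hxi]
    simp [hl, hv₀]
  · obtain ⟨c, hc, hcbig⟩ := hlast h5
    have hc' : (v₀ :: l)[Fintype.card V - 1]? = some c := by
      rw [← hlen, ← List.getLast?_eq_getElem?, List.getLast?_cons, Option.mem_def.mp hc]
      rfl
    rwa [Option.some_injective _ ((hx i).symm.trans (hi ▸ hc'))]

end SimpleGraph

namespace DegreeThreeCritical

variable {V : Type} [Fintype V] {G : SimpleGraph V} [DecidableRel G.Adj]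

lemma card_edgeFinset (hG : DegreeThreeCritical G) :
    #G.edgeFinset = 2 * Fintype.card V - 2 := by
  rw [← hG.1, ← Set.ncard_coe_finset, SimpleGraph.coe_edgeFinset]

lemma properSubgraphsDegenerate (hG : DegreeThreeCritical G) :
    G.ProperSubgraphsDegenerate 2 := by
  intro S hS hne
  obtain ⟨v, hv, hdeg⟩ := hG.2 S (by rwa [← coe_univ, coe_ssubset]) (by simpa using hne)
  refine ⟨v, hv, ?_⟩
  rwa [SimpleGraph.degreeIn, ← Set.ncard_coe_finset, coe_filter]

end DegreeThreeCritical

/-- Every degree 3-critical graph `G` on `n ≥ 4` vertices has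
an ordering `x₁, …, x_n` of its vertices (here indexed by `Fin n`, so position
`i` of the paper corresponds to index `i - 1`) such that: (i) the first vertex
has forward degree 3; (ii) the vertices in positions `2, …, n−2` have forward
degree 2; (iii) the vertex in position `n−1` has forward degree 1; and (iv) if
`n ≥ 7`, the last vertex has degree at least 4 in `G`. -/
theorem degree_three_critical_ordering {V : Type} [Fintype V]
    (G : SimpleGraph V) (hn : 4 ≤ Fintype.card V)
    (hG : DegreeThreeCritical G) :
    ∃ x : Fin (Fintype.card V) ≃ V,
      (∀ i : Fin (Fintype.card V), (i : ℕ) = 0 → forwardDegree G x i = 3) ∧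
      (∀ i : Fin (Fintype.card V), 1 ≤ (i : ℕ) → (i : ℕ) ≤ Fintype.card V - 3 →
        forwardDegree G x i = 2) ∧
      (∀ i : Fin (Fintype.card V), (i : ℕ) = Fintype.card V - 2 →
        forwardDegree G x i = 1) ∧
      (7 ≤ Fintype.card V →
        ∀ i : Fin (Fintype.card V), (i : ℕ) = Fintype.card V - 1 →
          4 ≤ (G.neighborSet (x i)).ncard) := by
  classical
  obtain ⟨x, h0, hle, hlast⟩ :=
    hG.properSubgraphsDegenerate.exists_ordering hG.card_edgeFinset hn
  have hfd := SimpleGraph.forwardDegree_eq_of_sum_eq hn (fun i hi => (h0 i hi).le) hle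
    ((SimpleGraph.sum_forwardDegree x).trans hG.card_edgeFinset)
  refine ⟨x, h0, fun i h1 h2 => ?_, fun i hi => ?_, fun h7 i hi => ?_⟩
  · rw [hfd, if_neg (by omega)]
    omega
  · rw [hfd, if_neg (by omega)]
    omega
  · rw [Set.ncard_eq_toFinset_card', ← SimpleGraph.neighborFinset_def,
      SimpleGraph.card_neighborFinset_eq_degree]
    exact hlast (by omega) i hi
end

section
/- Let G be a finite simple graph on n vertices with exactly 2n−2 edges and no proper subgraph of minimum degree 3. Then G has no edge uv such that both u and v have degree at least 4 in G. -/
/-- `G` has a proper (not necessarily induced) subgraph of minimum degree 3: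
a nonempty subgraph `H ≠ G` every vertex of which has at least 3 neighbours
within `H`. -/
def HasProperMinDegThreeSubgraph {V : Type} (G : SimpleGraph V) : Prop :=
  ∃ H : G.Subgraph, H ≠ ⊤ ∧ H.verts.Nonempty ∧
    ∀ v ∈ H.verts, 3 ≤ (H.neighborSet v).ncard

/-!
If some vertex has degree at most 2, repeatedly delete a vertex with at most 2 neighbours among
the remaining ones. Each deletion costs at most 2 edges, so the invariant `e ≥ 2n - 2` survives,
and since 2 or 3 vertices span fewer than `2n - 2` edges the process stops at a nonempty induced
subgraph of minimum degree 3; it misses the low-degree vertex, hence is proper. Otherwise every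
degree is at least 3, and deleting an edge between two vertices of degree at least 4 leaves a
proper spanning subgraph of minimum degree 3.
-/

namespace SimpleGraph

variable {V : Type*} (G : SimpleGraph V)

theorem ncard_edgeSet_inter_sym2_le_sdiff_singleton_add [Finite V] (S : Set V) (w : V) :
    (G.edgeSet ∩ S.sym2).ncard ≤
      (G.edgeSet ∩ (S \ {w}).sym2).ncard + (S ∩ G.neighborSet w).ncard := by
  have hsub : G.edgeSet ∩ S.sym2 ⊆
      G.edgeSet ∩ (S \ {w}).sym2 ∪ (fun v => s(w, v)) '' (S ∩ G.neighborSet w) := by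
    rintro ⟨a, b⟩ ⟨hab, ha, hb⟩
    by_cases haw : a = w
    · subst haw
      exact Or.inr ⟨b, ⟨hb, hab⟩, rfl⟩
    by_cases hbw : b = w
    · subst hbw
      exact Or.inr ⟨a, ⟨ha, (G.mem_edgeSet.mp hab).symm⟩, Sym2.eq_swap⟩
    exact Or.inl ⟨hab, ⟨ha, haw⟩, hb, hbw⟩
  calc (G.edgeSet ∩ S.sym2).ncard
      ≤ (G.edgeSet ∩ (S \ {w}).sym2 ∪ (fun v => s(w, v)) '' (S ∩ G.neighborSet w)).ncard :=
        Set.ncard_le_ncard hsub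
    _ ≤ (G.edgeSet ∩ (S \ {w}).sym2).ncard +
          ((fun v => s(w, v)) '' (S ∩ G.neighborSet w)).ncard :=
        Set.ncard_union_le _ _
    _ ≤ _ := by grw [Set.ncard_image_le]

theorem two_mul_ncard_edgeSet_inter_sym2_le [Finite V] (S : Set V) :
    2 * (G.edgeSet ∩ S.sym2).ncard ≤ S.ncard * (S.ncard - 1) := by
  induction S, S.toFinite using Set.Finite.induction_on with
  | empty => simp
  | @insert a S haS _ ih =>
    have hdel := G.ncard_edgeSet_inter_sym2_le_sdiff_singleton_add (insert a S) a
    rw [Set.insert_sdiff_self_of_notMem haS] at hdel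
    have hnbr : (insert a S ∩ G.neighborSet a).ncard ≤ S.ncard := by
      refine Set.ncard_le_ncard fun x ⟨hx, hax⟩ => ?_
      exact hx.resolve_left (G.ne_of_adj hax).symm
    rw [Set.ncard_insert_of_notMem haS, Nat.add_sub_cancel]
    generalize S.ncard = n at *
    cases n with
    | zero => omega
    | succ n => rw [Nat.add_sub_cancel] at ih; nlinarith

theorem exists_three_le_ncard_inter_neighborSet [Finite V] (S : Set V) (hS : 2 ≤ S.ncard)
    (hE : 2 * S.ncard - 2 ≤ (G.edgeSet ∩ S.sym2).ncard) :
    ∃ T ⊆ S, T.Nonempty ∧ ∀ v ∈ T, 3 ≤ (T ∩ G.neighborSet v).ncard := by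
  induction hn : S.ncard using Nat.strong_induction_on generalizing S with
  | _ n ih =>
    subst hn
    by_cases hmin : ∀ v ∈ S, 3 ≤ (S ∩ G.neighborSet v).ncard
    · exact ⟨S, subset_rfl, Set.nonempty_of_ncard_ne_zero (by omega), hmin⟩
    push Not at hmin
    obtain ⟨w, hwS, hw⟩ := hmin
    have hS3 : 3 ≤ S.ncard := by
      have := G.two_mul_ncard_edgeSet_inter_sym2_le S
      by_contra! h
      rw [show S.ncard = 2 by omega] at this hE
      omega
    have hcard : (S \ {w}).ncard = S.ncard - 1 := Set.ncard_sdiff_singleton_of_mem hwS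
    have hdel := G.ncard_edgeSet_inter_sym2_le_sdiff_singleton_add S w
    obtain ⟨T, hTS, hT⟩ := ih _ (by omega) (S \ {w}) (by omega) (by omega) hcard
    exact ⟨T, hTS.trans Set.sdiff_subset, hT⟩

theorem exists_subgraph_three_le_ncard_neighborSet [Finite V] (hV : 2 ≤ Nat.card V)
    (hE : 2 * Nat.card V - 2 ≤ G.edgeSet.ncard) :
    ∃ H : G.Subgraph, H.verts.Nonempty ∧ ∀ v ∈ H.verts, 3 ≤ (H.neighborSet v).ncard := by
  obtain ⟨T, -, hT, hdeg⟩ := G.exists_three_le_ncard_inter_neighborSet Set.univ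
    (by rwa [Set.ncard_univ]) (by rwa [Set.ncard_univ, Set.sym2_univ, Set.inter_univ])
  refine ⟨(⊤ : G.Subgraph).induce T, hT, fun v (hv : v ∈ T) => ?_⟩
  convert hdeg v hv using 2
  ext w
  simp [hv]

theorem Subgraph.ne_top_of_ncard_neighborSet_lt {G : SimpleGraph V} {H : G.Subgraph} {k : ℕ}
    (hH : ∀ v ∈ H.verts, k ≤ (H.neighborSet v).ncard) {w : V} (hw : (G.neighborSet w).ncard < k) :
    H ≠ ⊤ := by
  rintro rfl
  exact (hH w trivial).not_gt hw

theorem Subgraph.neighborSet_deleteEdges_top_singleton (e : Sym2 V) (x : V) :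
    ((⊤ : G.Subgraph).deleteEdges {e}).neighborSet x = G.neighborSet x \ {y | s(x, y) = e} := by
  ext y
  simp

theorem le_ncard_neighborSet_deleteEdges_top_singleton [Finite V] {k : ℕ} {u v : V}
    (hdeg : ∀ x, k ≤ (G.neighborSet x).ncard) (hu : k + 1 ≤ (G.neighborSet u).ncard)
    (hv : k + 1 ≤ (G.neighborSet v).ncard) (x : V) :
    k ≤ (((⊤ : G.Subgraph).deleteEdges {s(u, v)}).neighborSet x).ncard := by
  rw [Subgraph.neighborSet_deleteEdges_top_singleton]
  refine le_trans ?_ (Set.le_ncard_sdiff _ _)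
  have hlost : {y | s(x, y) = s(u, v)}.ncard ≤ 1 :=
    (Set.ncard_le_one_iff).mpr fun hy hy' => Sym2.congr_right.mp (hy.trans hy'.symm)
  by_cases hx : x = u ∨ x = v
  · rcases hx with rfl | rfl <;> omega
  · have hempty : {y | s(x, y) = s(u, v)} = ∅ :=
      Set.eq_empty_of_forall_notMem fun y hy => hx (Sym2.mem_iff.mp (hy ▸ Sym2.mem_mk_left x y))
    rw [hempty, Set.ncard_empty, Nat.sub_zero]
    exact hdeg x

end SimpleGraph

open SimpleGraph

/-- Let `G` be a finite simple graph on `n` vertices with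
exactly `2n − 2` edges and no proper subgraph of minimum degree 3.  Then `G`
has no edge `uv` such that both `u` and `v` have degree at least 4 in `G`. -/
theorem no_adjacent_degree_four_vertices {V : Type} [Fintype V]
    (G : SimpleGraph V)
    (he : G.edgeSet.ncard = 2 * Fintype.card V - 2)
    (hG : ¬ HasProperMinDegThreeSubgraph G) :
    ¬ ∃ u v : V, G.Adj u v ∧
      4 ≤ (G.neighborSet u).ncard ∧ 4 ≤ (G.neighborSet v).ncard := by
  rintro ⟨u, v, huv, hu, hv⟩
  apply hG
  by_cases hlow : ∃ w, (G.neighborSet w).ncard < 3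
  · obtain ⟨w, hw⟩ := hlow
    have hV : 2 ≤ Nat.card V := Finite.one_lt_card_iff_nontrivial.mpr ⟨u, v, huv.ne⟩
    obtain ⟨H, hH, hdeg⟩ := G.exists_subgraph_three_le_ncard_neighborSet hV
      (by rw [he, Nat.card_eq_fintype_card])
    exact ⟨H, Subgraph.ne_top_of_ncard_neighborSet_lt hdeg hw, hH, hdeg⟩
  · push Not at hlow
    have hne : (⊤ : G.Subgraph).deleteEdges {s(u, v)} ≠ ⊤ := fun htop => by
      have hadj : ((⊤ : G.Subgraph).deleteEdges {s(u, v)}).Adj u v := by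
        rw [htop]; exact huv
      simp at hadj
    exact ⟨_, hne, ⟨u, trivial⟩,
      fun x _ => G.le_ncard_neighborSet_deleteEdges_top_singleton hlow hu hv x⟩
end

section
/- Every degree 3-critical graph on n ≥ 6 vertices contains a cycle of length 6. -/
/-!
Every proper vertex set `S` of a degree 3-critical graph is 2-degenerate, hence spans at most
`2|S| - 3` edges. Comparing with the `2n - 2` edges of `G`, every vertex has degree at least 3,
some vertex `x` has degree exactly 3, and `G - x` is tight: it spans exactly `2(n - 1) - 3` edges.
A tight 2-degenerate set arises from a triangle by repeatedly adding a vertex with exactly two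
neighbours, and tracking this construction shows that, unless a 6-cycle appears, the set is either
a vertex joined to a double star or `K_{2,k}` (`k ≥ 3`) plus one edge inside the `k`-side. In both
shapes the vertices of degree 2 must be adjacent to `x`, and this closes a 6-cycle.
-/

open Finset SimpleGraph

variable {V : Type} {G : SimpleGraph V}

theorem hasCycleOfLength_six {a b c d e f : V} (hab : G.Adj a b) (hbc : G.Adj b c)
    (hcd : G.Adj c d) (hde : G.Adj d e) (hef : G.Adj e f) (hfa : G.Adj f a)
    (hnd : [a, b, c, d, e, f].Nodup) : HasCycleOfLength G 6 := by
  refine ⟨a, .cons hab (.cons hbc (.cons hcd (.cons hde (.cons hef (.cons hfa .nil))))),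
    ?_, rfl⟩
  rw [Walk.cons_isCycle_iff]
  refine ⟨Walk.IsPath.mk' ((List.nodup_rotate (n := 1)).2 hnd), ?_⟩
  simp only [List.nodup_cons, List.mem_cons] at hnd
  simp only [Walk.edges_cons, Walk.edges_nil, List.mem_cons, Sym2.eq, Sym2.rel_iff',
    Prod.mk.injEq, Prod.swap_prod_mk, and_true, true_and, List.not_mem_nil, or_false, not_or,
    not_and]
  tauto

variable [DecidableRel G.Adj]

def nbhdIn (G : SimpleGraph V) [DecidableRel G.Adj] (S : Finset V) (v : V) : Finset V :=
  {u ∈ S | G.Adj v u}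

@[simp]
theorem mem_nbhdIn {S : Finset V} {v u : V} : u ∈ nbhdIn G S v ↔ u ∈ S ∧ G.Adj v u :=
  mem_filter

def degSum (G : SimpleGraph V) [DecidableRel G.Adj] (S : Finset V) : ℕ :=
  ∑ v ∈ S, #(nbhdIn G S v)

/-- `G[S]` has exactly `2|S| - 3` edges, stated through the degree sum `2|E(G[S])|` to avoid
truncated subtraction. -/
def IsTight (G : SimpleGraph V) [DecidableRel G.Adj] (S : Finset V) : Prop :=
  degSum G S + 6 = 4 * #S

def IsTwoDegenerate (G : SimpleGraph V) [DecidableRel G.Adj] (S : Finset V) : Prop :=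
  ∀ T ⊆ S, T.Nonempty → ∃ v ∈ T, #(nbhdIn G T v) ≤ 2

theorem IsTwoDegenerate.mono {S T : Finset V} (h : IsTwoDegenerate G S) (hT : T ⊆ S) :
    IsTwoDegenerate G T :=
  fun U hU => h U (hU.trans hT)

section Fintype

variable [Fintype V]

theorem card_nbhdIn_univ (v : V) : #(nbhdIn G univ v) = G.degree v := by
  rw [← card_neighborFinset_eq_degree]
  congr 1
  ext
  simp

theorem DegreeThreeCritical.isTwoDegenerate (hG : DegreeThreeCritical G) {S : Finset V}
    (hS : S ≠ univ) : IsTwoDegenerate G S := by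
  intro T hTS hT
  have hTu : (T : Set V) ⊂ Set.univ := Set.ssubset_univ_iff.2 <| by
    rw [Ne, coe_eq_univ]
    rintro rfl
    exact hS (univ_subset_iff.1 hTS)
  obtain ⟨v, hv, hle⟩ := hG.2 T hTu (coe_nonempty.2 hT)
  refine ⟨v, hv, ?_⟩
  rwa [← Set.ncard_coe_finset, nbhdIn, coe_filter]

theorem DegreeThreeCritical.degSum_univ (hG : DegreeThreeCritical G) :
    degSum G univ = 4 * Fintype.card V - 4 := by
  have h := hG.1
  rw [← coe_edgeFinset, Set.ncard_coe_finset] at h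
  rw [degSum, sum_congr rfl fun v _ => card_nbhdIn_univ v, sum_degrees_eq_twice_card_edges, h]
  omega

end Fintype

variable [DecidableEq V]

theorem nbhdIn_insert_self (S : Finset V) (v : V) : nbhdIn G (insert v S) v = nbhdIn G S v := by
  ext u
  simp only [mem_nbhdIn, mem_insert, and_congr_left_iff, or_iff_right_iff_imp]
  rintro h rfl
  exact (G.irrefl h).elim

theorem nbhdIn_insert_of_adj {S : Finset V} {v w : V} (h : G.Adj w v) :
    nbhdIn G (insert v S) w = insert v (nbhdIn G S w) := by
  ext u
  simp only [mem_nbhdIn, mem_insert]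
  grind

theorem nbhdIn_insert_of_not_adj {S : Finset V} {v w : V} (h : ¬ G.Adj w v) :
    nbhdIn G (insert v S) w = nbhdIn G S w := by
  ext u
  simp only [mem_nbhdIn, mem_insert]
  grind

theorem not_adj_of_nbhdIn_eq_pair {S : Finset V} {u w α β : V} (hN : nbhdIn G S u = {α, β})
    (hw : w ∈ S) (hα : w ≠ α) (hβ : w ≠ β) : ¬ G.Adj u w := fun h => by
  have : w ∈ nbhdIn G S u := mem_nbhdIn.2 ⟨hw, h⟩
  simp_all

theorem nbhdIn_insert_of_ne {S : Finset V} {v w α β : V} (hN : nbhdIn G S v = {α, β})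
    (hw : w ∈ S) (hα : w ≠ α) (hβ : w ≠ β) : nbhdIn G (insert v S) w = nbhdIn G S w :=
  nbhdIn_insert_of_not_adj fun h => not_adj_of_nbhdIn_eq_pair hN hw hα hβ h.symm

theorem adj_of_nbhdIn_eq_pair {S : Finset V} {v α β : V} (hN : nbhdIn G S v = {α, β}) :
    α ∈ S ∧ β ∈ S ∧ G.Adj v α ∧ G.Adj v β := by
  have hα : α ∈ nbhdIn G S v := hN ▸ mem_insert_self α {β}
  have hβ : β ∈ nbhdIn G S v := hN ▸ mem_insert_of_mem (mem_singleton_self β)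
  rw [mem_nbhdIn] at hα hβ
  exact ⟨hα.1, hβ.1, hα.2, hβ.2⟩

theorem nbhdIn_subset_erase {S : Finset V} (v : V) : nbhdIn G S v ⊆ S.erase v := fun u hu => by
  rw [mem_nbhdIn] at hu
  exact mem_erase.2 ⟨hu.2.ne', hu.1⟩

theorem degSum_insert {S : Finset V} {v : V} (hv : v ∉ S) :
    degSum G (insert v S) = degSum G S + 2 * #(nbhdIn G S v) := by
  have hcard : ∀ u ∈ S,
      #(nbhdIn G (insert v S) u) = #(nbhdIn G S u) + if G.Adj v u then 1 else 0 := by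
    intro u _
    split_ifs with h
    · rw [nbhdIn_insert_of_adj h.symm, card_insert_of_notMem fun h' => hv (mem_nbhdIn.1 h').1]
    · rw [nbhdIn_insert_of_not_adj fun h' => h h'.symm, add_zero]
  rw [degSum, sum_insert hv, nbhdIn_insert_self, sum_congr rfl hcard, sum_add_distrib, sum_boole]
  simp only [degSum, nbhdIn, Nat.cast_id]
  ring

theorem degSum_le (S : Finset V) : degSum G S ≤ #S * (#S - 1) := by
  calc degSum G S ≤ ∑ v ∈ S, (#S - 1) := sum_le_sum fun v hv => by
        simpa [card_erase_of_mem hv] using card_le_card (nbhdIn_subset_erase (G := G) (S := S) v)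
    _ = #S * (#S - 1) := by rw [sum_const, smul_eq_mul]

theorem IsTwoDegenerate.exists_insert {S : Finset V} (h : IsTwoDegenerate G S)
    (hS : S.Nonempty) : ∃ v T, v ∉ T ∧ insert v T = S ∧ #(nbhdIn G T v) ≤ 2 := by
  obtain ⟨v, hv, hdeg⟩ := h S subset_rfl hS
  refine ⟨v, S.erase v, notMem_erase v S, insert_erase hv, ?_⟩
  rwa [← nbhdIn_insert_self, insert_erase hv]

theorem IsTwoDegenerate.degSum_add_six_le {S : Finset V} (h : IsTwoDegenerate G S)
    (hS : 2 ≤ #S) : degSum G S + 6 ≤ 4 * #S := by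
  induction S using Finset.strongInduction with
  | H S ih =>
    obtain ⟨v, T, hv, rfl, hdeg⟩ := h.exists_insert (card_pos.1 (by omega))
    rw [card_insert_of_notMem hv] at hS ⊢
    rw [degSum_insert hv]
    by_cases hT : #T = 1
    · have h1 := degSum_le (G := G) T
      have h2 : #(nbhdIn G T v) ≤ #T := card_filter_le _ _
      rw [hT] at h1 h2
      omega
    · have := ih T (ssubset_insert hv) (h.mono (subset_insert v T)) (by omega)
      omega

theorem IsTwoDegenerate.exists_insert_of_isTight {S : Finset V} (h : IsTwoDegenerate G S)
    (ht : IsTight G S) (hS : 3 ≤ #S) :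
    ∃ v T, v ∉ T ∧ insert v T = S ∧ #(nbhdIn G T v) = 2 ∧ IsTight G T := by
  obtain ⟨v, T, hv, rfl, hdeg⟩ := h.exists_insert (card_pos.1 (by omega))
  have hsparse := (h.mono (subset_insert v T)).degSum_add_six_le
  unfold IsTight at ht ⊢
  rw [card_insert_of_notMem hv, degSum_insert hv] at ht
  rw [card_insert_of_notMem hv] at hS
  have := hsparse (by omega)
  exact ⟨v, T, hv, rfl, by omega, by omega⟩

theorem adj_of_isTight_pair {a b : V} (hab : a ≠ b) (h : IsTight G {a, b}) : G.Adj a b := by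
  have hb := degSum_le (G := G) {b}
  rw [card_singleton] at hb
  rw [IsTight, degSum_insert (notMem_singleton.2 hab), card_pair hab] at h
  obtain ⟨u, hu⟩ := card_pos.1 (by omega : 0 < #(nbhdIn G {b} a))
  rw [mem_nbhdIn, mem_singleton] at hu
  exact hu.1 ▸ hu.2

section Fintype

variable [Fintype V]

theorem degSum_univ_erase_add (x : V) :
    degSum G (univ.erase x) + 2 * G.degree x = degSum G univ := by
  have h := degSum_insert (G := G) (notMem_erase x univ)
  rwa [← nbhdIn_insert_self, insert_erase (mem_univ x), card_nbhdIn_univ, eq_comm] at h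

theorem adj_of_card_nbhdIn_lt_degree {x u : V} (h : #(nbhdIn G (univ.erase x) u) < G.degree u) :
    G.Adj u x := by
  by_contra hux
  rw [← card_neighborFinset_eq_degree] at h
  refine h.not_ge (card_le_card fun w hw => ?_)
  rw [mem_neighborFinset] at hw
  exact mem_nbhdIn.2 ⟨mem_erase.2 ⟨by rintro rfl; exact hux hw, mem_univ w⟩, hw⟩

namespace DegreeThreeCritical

theorem three_le_degree (hG : DegreeThreeCritical G) (hn : 3 ≤ Fintype.card V) (v : V) :
    3 ≤ G.degree v := by
  have hsplit := degSum_univ_erase_add (G := G) v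
  have hsparse := (hG.isTwoDegenerate (erase_ssubset (mem_univ v)).ne).degSum_add_six_le
  rw [card_erase_of_mem (mem_univ v), card_univ] at hsparse
  have := hsparse (by omega)
  rw [hG.degSum_univ] at hsplit
  omega

theorem exists_degree_eq_three (hG : DegreeThreeCritical G) (hn : 3 ≤ Fintype.card V) :
    ∃ x, G.degree x = 3 := by
  by_contra! hne
  have h4 : ∀ v ∈ univ, 4 ≤ G.degree v := fun v _ =>
    (hG.three_le_degree hn v).lt_of_ne (hne v).symm
  have hsum := card_nsmul_le_sum univ _ 4 h4
  rw [← sum_congr rfl fun v _ => card_nbhdIn_univ (G := G) v, ← degSum, hG.degSum_univ,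
    card_univ, smul_eq_mul] at hsum
  omega

theorem isTight_univ_erase (hG : DegreeThreeCritical G) {x : V} (hx : G.degree x = 3) :
    IsTight G (univ.erase x) := by
  have hsplit := degSum_univ_erase_add (G := G) x
  have := card_pos.2 ⟨x, mem_univ x⟩
  rw [hG.degSum_univ, hx] at hsplit
  rw [IsTight, card_erase_of_mem (mem_univ x), card_univ]
  omega

end DegreeThreeCritical

end Fintype

/-- `r` is adjacent to every other vertex of `S`, and `S \ {r}` induces a double star with adjacent
centres `s` and `t`: every other vertex is a leaf attached to `s` or to `t`. -/
structure IsConeOverDoubleStar (G : SimpleGraph V) [DecidableRel G.Adj] (S : Finset V)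
    (r s t : V) : Prop where
  apex_mem : r ∈ S
  left_mem : s ∈ S
  right_mem : t ∈ S
  adj_left : G.Adj r s
  adj_right : G.Adj r t
  adj_centres : G.Adj s t
  nbhdIn_leaf : ∀ u ∈ S, u ≠ r → u ≠ s → u ≠ t → nbhdIn G S u = {r, s} ∨ nbhdIn G S u = {r, t}

/-- `G[S]` is `K_{2,k}` with nonadjacent poles `a`, `b`, plus the edge `cd` inside the other side,
which has at least three vertices. -/
structure IsSuspensionOfEdge (G : SimpleGraph V) [DecidableRel G.Adj] (S : Finset V)
    (a b c d : V) : Prop where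
  left_pole_mem : a ∈ S
  right_pole_mem : b ∈ S
  left_end_mem : c ∈ S
  right_end_mem : d ∈ S
  poles_ne : a ≠ b
  not_adj_poles : ¬ G.Adj a b
  adj_ends : G.Adj c d
  adj_left_left : G.Adj a c
  adj_left_right : G.Adj a d
  adj_right_left : G.Adj b c
  adj_right_right : G.Adj b d
  nbhdIn_page : ∀ u ∈ S, u ≠ a → u ≠ b → u ≠ c → u ≠ d → nbhdIn G S u = {a, b}
  exists_page : ∃ e ∈ S, e ≠ a ∧ e ≠ b ∧ e ≠ c ∧ e ≠ d

def IsConeOrSuspension (G : SimpleGraph V) [DecidableRel G.Adj] (S : Finset V) : Prop :=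
  (∃ r s t, IsConeOverDoubleStar G S r s t) ∨ ∃ a b c d, IsSuspensionOfEdge G S a b c d

namespace IsConeOverDoubleStar

variable {S : Finset V} {r s t v : V}

theorem swap (h : IsConeOverDoubleStar G S r s t) : IsConeOverDoubleStar G S r t s :=
  ⟨h.apex_mem, h.right_mem, h.left_mem, h.adj_right, h.adj_left, h.adj_centres.symm,
    fun u hu hr hs ht => (h.nbhdIn_leaf u hu hr ht hs).symm⟩

theorem adj_apex_of_leaf (h : IsConeOverDoubleStar G S r s t) {u : V} (hu : u ∈ S)
    (hr : u ≠ r) (hs : u ≠ s) (ht : u ≠ t) : G.Adj u r := by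
  rcases h.nbhdIn_leaf u hu hr hs ht with hN | hN <;> exact (adj_of_nbhdIn_eq_pair hN).2.2.1

theorem forall_leftLeaf_or_exists_rightLeaf (h : IsConeOverDoubleStar G S r s t) :
    (∀ u ∈ S, u ≠ r → u ≠ s → u ≠ t → nbhdIn G S u = {r, s}) ∨
      ∃ w ∈ S, w ≠ r ∧ w ≠ s ∧ w ≠ t ∧ nbhdIn G S w = {r, t} := by
  by_contra! ⟨hu, hw⟩
  obtain ⟨u, hu, hr, hs, ht, hN⟩ := hu
  exact (h.nbhdIn_leaf u hu hr hs ht).elim hN (hw u hu hr hs ht)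

theorem nbhdIn_right_of_forall_leftLeaf (h : IsConeOverDoubleStar G S r s t)
    (hleft : ∀ u ∈ S, u ≠ r → u ≠ s → u ≠ t → nbhdIn G S u = {r, s}) :
    nbhdIn G S t = {r, s} := by
  ext u
  simp only [mem_nbhdIn, mem_insert, mem_singleton]
  refine ⟨fun ⟨hu, htu⟩ => ?_, ?_⟩
  · by_contra! hne
    have := hleft u hu hne.1 hne.2 htu.ne'
    have ht : t ∈ nbhdIn G S u := mem_nbhdIn.2 ⟨h.right_mem, htu.symm⟩
    rw [this] at ht
    simp only [mem_insert, mem_singleton] at ht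
    rcases ht with rfl | rfl
    exacts [h.adj_right.ne rfl, h.adj_centres.ne rfl]
  · rintro (rfl | rfl)
    exacts [⟨h.apex_mem, h.adj_right.symm⟩, ⟨h.left_mem, h.adj_centres.symm⟩]

theorem ne_of_leftLeaf_of_rightLeaf (h : IsConeOverDoubleStar G S r s t)
    {q w : V} (hqN : nbhdIn G S q = {r, s}) (hwN : nbhdIn G S w = {r, t}) : q ≠ w := by
  rintro rfl
  exact not_adj_of_nbhdIn_eq_pair hwN h.left_mem h.adj_left.ne' h.adj_centres.ne
    (adj_of_nbhdIn_eq_pair hqN).2.2.2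

theorem hasCycleOfLength_six_of_adj_leaves (h : IsConeOverDoubleStar G S r s t) {x q w : V}
    (hx : x ∉ S) (hq : q ∈ S) (hqr : q ≠ r) (hqs : q ≠ s) (hqt : q ≠ t)
    (hw : w ∈ S) (hwr : w ≠ r) (hws : w ≠ s) (hwt : w ≠ t) (hqw : q ≠ w)
    (hxq : G.Adj x q) (hxw : G.Adj x w) : HasCycleOfLength G 6 := by
  obtain ⟨hr, hs, ht, hrs, hrt, hst, -⟩ := id h
  have hqr' := h.adj_apex_of_leaf hq hqr hqs hqt
  rcases h.nbhdIn_leaf w hw hwr hws hwt with hN | hN <;>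
    obtain ⟨-, -, -, hwc⟩ := adj_of_nbhdIn_eq_pair hN
  · exact hasCycleOfLength_six hxq hqr' h.adj_right h.adj_centres.symm hwc.symm hxw.symm
      (by grind [List.nodup_cons, SimpleGraph.irrefl])
  · exact hasCycleOfLength_six hxq hqr' h.adj_left h.adj_centres hwc.symm hxw.symm
      (by grind [List.nodup_cons, SimpleGraph.irrefl])

theorem insert_of_nbhdIn_eq_apex_left (h : IsConeOverDoubleStar G S r s t)
    (hN : nbhdIn G S v = {r, s}) : IsConeOverDoubleStar G (insert v S) r s t := by
  refine ⟨mem_insert_of_mem h.apex_mem, mem_insert_of_mem h.left_mem,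
    mem_insert_of_mem h.right_mem, h.adj_left, h.adj_right, h.adj_centres, fun u hu hr hs ht => ?_⟩
  rcases mem_insert.1 hu with rfl | hu
  · exact .inl (by rw [nbhdIn_insert_self, hN])
  · rw [nbhdIn_insert_of_ne hN hu hr hs]
    exact h.nbhdIn_leaf u hu hr hs ht

theorem insert_of_nbhdIn_eq_centres_of_forall_leftLeaf (h : IsConeOverDoubleStar G S r s t)
    (hN : nbhdIn G S v = {s, t})
    (hleft : ∀ u ∈ S, u ≠ r → u ≠ s → u ≠ t → nbhdIn G S u = {r, s}) :
    IsConeOverDoubleStar G (insert v S) s r t := by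
  refine ⟨mem_insert_of_mem h.left_mem, mem_insert_of_mem h.apex_mem,
    mem_insert_of_mem h.right_mem, h.adj_left.symm, h.adj_centres, h.adj_right,
    fun u hu hs hr ht => ?_⟩
  rcases mem_insert.1 hu with rfl | hu
  · exact .inr (by rw [nbhdIn_insert_self, hN])
  · rw [nbhdIn_insert_of_ne hN hu hs ht, hleft u hu hr hs ht, pair_comm]
    exact .inl rfl

theorem insert_of_nbhdIn_eq_centres (h : IsConeOverDoubleStar G S r s t) (hv : v ∉ S)
    (hN : nbhdIn G S v = {s, t}) :
    HasCycleOfLength G 6 ∨ IsConeOrSuspension G (insert v S) := by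
  rcases h.forall_leftLeaf_or_exists_rightLeaf with hleft | ⟨w, hw, hwr, hws, hwt, hwN⟩
  · exact .inr (.inl ⟨s, r, t, h.insert_of_nbhdIn_eq_centres_of_forall_leftLeaf hN hleft⟩)
  rcases h.swap.forall_leftLeaf_or_exists_rightLeaf with hright | ⟨q, hq, hqr, hqt, hqs, hqN⟩
  · rw [pair_comm] at hN
    exact .inr (.inl ⟨t, r, s, h.swap.insert_of_nbhdIn_eq_centres_of_forall_leftLeaf hN hright⟩)
  obtain ⟨hr, hs, ht, hrs, hrt, hst, -⟩ := id h
  obtain ⟨-, -, hvs, hvt⟩ := adj_of_nbhdIn_eq_pair hN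
  obtain ⟨-, -, hqr', hqs'⟩ := adj_of_nbhdIn_eq_pair hqN
  obtain ⟨-, -, hwr', hwt'⟩ := adj_of_nbhdIn_eq_pair hwN
  have hqw := h.ne_of_leftLeaf_of_rightLeaf hqN hwN
  exact .inl (hasCycleOfLength_six hvs hqs'.symm hqr' hwr'.symm hwt' hvt.symm
    (by grind [List.nodup_cons, SimpleGraph.irrefl]))

theorem insert_of_nbhdIn_eq_apex_leftLeaf (h : IsConeOverDoubleStar G S r s t) (hv : v ∉ S)
    {q : V} (hq : q ∈ S) (hqr : q ≠ r) (hqs : q ≠ s) (hqt : q ≠ t)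
    (hqN : nbhdIn G S q = {r, s}) (hN : nbhdIn G S v = {r, q}) :
    HasCycleOfLength G 6 ∨ IsConeOrSuspension G (insert v S) := by
  obtain ⟨hr, hs, ht, hrs, hrt, hst, -⟩ := id h
  obtain ⟨-, -, hqr', hqs'⟩ := adj_of_nbhdIn_eq_pair hqN
  rcases h.forall_leftLeaf_or_exists_rightLeaf with hleft | ⟨w, hw, hwr, hws, hwt, hwN⟩
  · refine .inr (.inl ⟨r, s, q, mem_insert_of_mem hr, mem_insert_of_mem hs, mem_insert_of_mem hq,
      hrs, hqr'.symm, hqs'.symm, fun u hu hur hus huq => ?_⟩)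
    rcases mem_insert.1 hu with rfl | hu
    · exact .inr (by rw [nbhdIn_insert_self, hN])
    rw [nbhdIn_insert_of_ne hN hu hur huq]
    by_cases hut : u = t
    · exact .inl (hut ▸ h.nbhdIn_right_of_forall_leftLeaf hleft)
    · exact .inl (hleft u hu hur hus hut)
  obtain ⟨-, -, hvr, hvq⟩ := adj_of_nbhdIn_eq_pair hN
  obtain ⟨-, -, hwr', hwt'⟩ := adj_of_nbhdIn_eq_pair hwN
  have hqw := h.ne_of_leftLeaf_of_rightLeaf hqN hwN
  exact .inl (hasCycleOfLength_six hvr hwr'.symm hwt' hst.symm hqs'.symm hvq.symm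
    (by grind [List.nodup_cons, SimpleGraph.irrefl]))

theorem insert_of_nbhdIn_eq_left_leftLeaf (h : IsConeOverDoubleStar G S r s t) (hv : v ∉ S)
    {q : V} (hq : q ∈ S) (hqr : q ≠ r) (hqs : q ≠ s) (hqt : q ≠ t)
    (hqN : nbhdIn G S q = {r, s}) (hN : nbhdIn G S v = {s, q}) :
    HasCycleOfLength G 6 ∨ IsConeOrSuspension G (insert v S) := by
  obtain ⟨hr, hs, ht, hrs, hrt, hst, -⟩ := id h
  obtain ⟨-, -, hqr', hqs'⟩ := adj_of_nbhdIn_eq_pair hqN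
  rcases h.forall_leftLeaf_or_exists_rightLeaf with hleft | ⟨w, hw, hwr, hws, hwt, hwN⟩
  · refine .inr (.inl ⟨s, r, q, mem_insert_of_mem hs, mem_insert_of_mem hr, mem_insert_of_mem hq,
      hrs.symm, hqs'.symm, hqr'.symm, fun u hu hus hur huq => ?_⟩)
    rcases mem_insert.1 hu with rfl | hu
    · exact .inr (by rw [nbhdIn_insert_self, hN])
    rw [nbhdIn_insert_of_ne hN hu hus huq, pair_comm]
    by_cases hut : u = t
    · exact .inl (hut ▸ h.nbhdIn_right_of_forall_leftLeaf hleft)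
    · exact .inl (hleft u hu hur hus hut)
  obtain ⟨-, -, hvs, hvq⟩ := adj_of_nbhdIn_eq_pair hN
  obtain ⟨-, -, hwr', hwt'⟩ := adj_of_nbhdIn_eq_pair hwN
  have hqw := h.ne_of_leftLeaf_of_rightLeaf hqN hwN
  exact .inl (hasCycleOfLength_six hvs hst hwt'.symm hwr' hqr'.symm hvq.symm
    (by grind [List.nodup_cons, SimpleGraph.irrefl]))

theorem insert_of_nbhdIn_eq_left_rightLeaf (h : IsConeOverDoubleStar G S r s t) (hv : v ∉ S)
    {w : V} (hw : w ∈ S) (hwr : w ≠ r) (hws : w ≠ s) (hwt : w ≠ t)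
    (hwN : nbhdIn G S w = {r, t}) (hN : nbhdIn G S v = {s, w}) :
    HasCycleOfLength G 6 ∨ IsConeOrSuspension G (insert v S) := by
  obtain ⟨hr, hs, ht, hrs, hrt, hst, -⟩ := id h
  obtain ⟨-, -, hwr', hwt'⟩ := adj_of_nbhdIn_eq_pair hwN
  obtain ⟨-, -, hvs, hvw⟩ := adj_of_nbhdIn_eq_pair hN
  rcases h.swap.forall_leftLeaf_or_exists_rightLeaf with hright | ⟨q, hq, hqr, hqt, hqs, hqN⟩
  · by_cases hw' : ∃ w' ∈ S, w' ≠ r ∧ w' ≠ s ∧ w' ≠ t ∧ w' ≠ w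
    · obtain ⟨w', hw', hw'r, hw's, hw't, hw'w⟩ := hw'
      obtain ⟨-, -, hw'r', hw't'⟩ := adj_of_nbhdIn_eq_pair (hright w' hw' hw'r hw't hw's)
      exact .inl (hasCycleOfLength_six hvs hst hw't'.symm hw'r' hwr'.symm hvw.symm
        (by grind [List.nodup_cons, SimpleGraph.irrefl]))
    push Not at hw'
    refine .inr (.inr ⟨s, w, r, t, mem_insert_of_mem hs, mem_insert_of_mem hw,
      mem_insert_of_mem hr, mem_insert_of_mem ht, hws.symm,
      not_adj_of_nbhdIn_eq_pair hwN hs hrs.ne' hst.ne ∘ G.adj_symm, hrt, hrs.symm, hst,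
      hwr', hwt', fun u hu hus huw hur hut => ?_,
      ⟨v, mem_insert_self v S, hvs.ne, hvw.ne, ?_, ?_⟩⟩)
    · rcases mem_insert.1 hu with rfl | hu
      · rw [nbhdIn_insert_self, hN]
      · exact absurd (hw' u hu hur hus hut) huw
    exacts [(ne_of_mem_of_not_mem hr hv).symm, (ne_of_mem_of_not_mem ht hv).symm]
  obtain ⟨-, -, hqr', hqs'⟩ := adj_of_nbhdIn_eq_pair hqN
  have hqw := h.ne_of_leftLeaf_of_rightLeaf hqN hwN
  exact .inl (hasCycleOfLength_six hvs hqs'.symm hqr' hrt hwt'.symm hvw.symm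
    (by grind [List.nodup_cons, SimpleGraph.irrefl]))


theorem insert_of_nbhdIn_eq_apex (h : IsConeOverDoubleStar G S r s t) (hv : v ∉ S) {β : V}
    (hβr : β ≠ r) (hN : nbhdIn G S v = {r, β}) :
    HasCycleOfLength G 6 ∨ IsConeOrSuspension G (insert v S) := by
  have hβ := (adj_of_nbhdIn_eq_pair hN).2.1
  by_cases hβs : β = s
  · exact .inr (.inl ⟨r, s, t, h.insert_of_nbhdIn_eq_apex_left (hβs ▸ hN)⟩)
  by_cases hβt : β = t
  · exact .inr (.inl ⟨r, t, s, h.swap.insert_of_nbhdIn_eq_apex_left (hβt ▸ hN)⟩)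
  rcases h.nbhdIn_leaf β hβ hβr hβs hβt with hβN | hβN
  · exact h.insert_of_nbhdIn_eq_apex_leftLeaf hv hβ hβr hβs hβt hβN hN
  · exact h.swap.insert_of_nbhdIn_eq_apex_leftLeaf hv hβ hβr hβt hβs hβN hN

theorem insert_of_nbhdIn_eq_left (h : IsConeOverDoubleStar G S r s t) (hv : v ∉ S) {β : V}
    (hβs : β ≠ s) (hN : nbhdIn G S v = {s, β}) :
    HasCycleOfLength G 6 ∨ IsConeOrSuspension G (insert v S) := by
  have hβ := (adj_of_nbhdIn_eq_pair hN).2.1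
  by_cases hβr : β = r
  · rw [hβr, pair_comm] at hN
    exact .inr (.inl ⟨r, s, t, h.insert_of_nbhdIn_eq_apex_left hN⟩)
  by_cases hβt : β = t
  · exact h.insert_of_nbhdIn_eq_centres hv (hβt ▸ hN)
  rcases h.nbhdIn_leaf β hβ hβr hβs hβt with hβN | hβN
  · exact h.insert_of_nbhdIn_eq_left_leftLeaf hv hβ hβr hβs hβt hβN hN
  · exact h.insert_of_nbhdIn_eq_left_rightLeaf hv hβ hβr hβs hβt hβN hN

theorem insert (h : IsConeOverDoubleStar G S r s t) (hv : v ∉ S) {α β : V} (hαβ : α ≠ β)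
    (hN : nbhdIn G S v = {α, β}) :
    HasCycleOfLength G 6 ∨ IsConeOrSuspension G (insert v S) := by
  have hN' : nbhdIn G S v = {β, α} := by rw [hN, pair_comm]
  obtain ⟨hα, hβ, hvα, hvβ⟩ := adj_of_nbhdIn_eq_pair hN
  by_cases hαr : α = r
  · exact h.insert_of_nbhdIn_eq_apex hv (hαr ▸ hαβ.symm) (hαr ▸ hN)
  by_cases hαs : α = s
  · exact h.insert_of_nbhdIn_eq_left hv (hαs ▸ hαβ.symm) (hαs ▸ hN)
  by_cases hαt : α = t
  · exact h.swap.insert_of_nbhdIn_eq_left hv (hαt ▸ hαβ.symm) (hαt ▸ hN)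
  by_cases hβr : β = r
  · exact h.insert_of_nbhdIn_eq_apex hv (hβr ▸ hαβ) (hβr ▸ hN')
  by_cases hβs : β = s
  · exact h.insert_of_nbhdIn_eq_left hv (hβs ▸ hαβ) (hβs ▸ hN')
  by_cases hβt : β = t
  · exact h.swap.insert_of_nbhdIn_eq_left hv (hβt ▸ hαβ) (hβt ▸ hN')
  exact .inl (h.hasCycleOfLength_six_of_adj_leaves hv hα hαr hαs hαt hβ hβr hβs hβt hαβ hvα hvβ)

end IsConeOverDoubleStar

namespace IsSuspensionOfEdge

variable {S : Finset V} {a b c d x : V}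

theorem swap_poles (h : IsSuspensionOfEdge G S a b c d) : IsSuspensionOfEdge G S b a c d where
  left_pole_mem := h.right_pole_mem
  right_pole_mem := h.left_pole_mem
  left_end_mem := h.left_end_mem
  right_end_mem := h.right_end_mem
  poles_ne := h.poles_ne.symm
  not_adj_poles := fun hba => h.not_adj_poles hba.symm
  adj_ends := h.adj_ends
  adj_left_left := h.adj_right_left
  adj_left_right := h.adj_right_right
  adj_right_left := h.adj_left_left
  adj_right_right := h.adj_left_right
  nbhdIn_page u hu hb ha hc hd := by rw [h.nbhdIn_page u hu ha hb hc hd, pair_comm]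
  exists_page :=
    let ⟨e, he, hea, heb, hec, hed⟩ := h.exists_page
    ⟨e, he, heb, hea, hec, hed⟩

theorem swap_ends (h : IsSuspensionOfEdge G S a b c d) : IsSuspensionOfEdge G S a b d c where
  left_pole_mem := h.left_pole_mem
  right_pole_mem := h.right_pole_mem
  left_end_mem := h.right_end_mem
  right_end_mem := h.left_end_mem
  poles_ne := h.poles_ne
  not_adj_poles := h.not_adj_poles
  adj_ends := h.adj_ends.symm
  adj_left_left := h.adj_left_right
  adj_left_right := h.adj_left_left
  adj_right_left := h.adj_right_right
  adj_right_right := h.adj_right_left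
  nbhdIn_page u hu ha hb hd hc := h.nbhdIn_page u hu ha hb hc hd
  exists_page :=
    let ⟨e, he, hea, heb, hec, hed⟩ := h.exists_page
    ⟨e, he, hea, heb, hed, hec⟩

theorem hasCycleOfLength_six_of_adj_pole (h : IsSuspensionOfEdge G S a b c d) (hx : x ∉ S)
    {β : V} (hβ : β ∈ S) (hβa : β ≠ a) (hβb : β ≠ b) (hxa : G.Adj x a) (hxβ : G.Adj x β) :
    HasCycleOfLength G 6 := by
  obtain ⟨ha, hb, hc, hd, hab, hnab, hcd, hac, had, hbc, hbd, -, e, he, hea, heb, hec, hed⟩ := id h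
  obtain ⟨-, -, hea', heb'⟩ := adj_of_nbhdIn_eq_pair (h.nbhdIn_page e he hea heb hec hed)
  by_cases hβc : β = c
  · subst hβc
    exact hasCycleOfLength_six hxa hea'.symm heb' hbd hcd.symm hxβ.symm
      (by grind [List.nodup_cons, SimpleGraph.irrefl])
  by_cases hβd : β = d
  · subst hβd
    exact hasCycleOfLength_six hxa hea'.symm heb' hbc hcd hxβ.symm
      (by grind [List.nodup_cons, SimpleGraph.irrefl])
  obtain ⟨-, -, -, hβb'⟩ := adj_of_nbhdIn_eq_pair (h.nbhdIn_page β hβ hβa hβb hβc hβd)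
  exact hasCycleOfLength_six hxa hac hcd hbd.symm hβb'.symm hxβ.symm
    (by grind [List.nodup_cons, SimpleGraph.irrefl])

theorem hasCycleOfLength_six_of_adj_end (h : IsSuspensionOfEdge G S a b c d) (hx : x ∉ S)
    {β : V} (hβ : β ∈ S) (hβa : β ≠ a) (hβb : β ≠ b) (hβc : β ≠ c) (hxc : G.Adj x c)
    (hxβ : G.Adj x β) : HasCycleOfLength G 6 := by
  obtain ⟨ha, hb, hc, hd, hab, hnab, hcd, hac, had, hbc, hbd, -, e, he, hea, heb, hec, hed⟩ := id h
  by_cases hβd : β = d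
  · subst hβd
    obtain ⟨-, -, hea', heb'⟩ := adj_of_nbhdIn_eq_pair (h.nbhdIn_page e he hea heb hec hed)
    exact hasCycleOfLength_six hxc hac.symm hea'.symm heb' hbd hxβ.symm
      (by grind [List.nodup_cons, SimpleGraph.irrefl])
  obtain ⟨-, -, -, hβb'⟩ := adj_of_nbhdIn_eq_pair (h.nbhdIn_page β hβ hβa hβb hβc hβd)
  exact hasCycleOfLength_six hxc hac.symm had hbd.symm hβb'.symm hxβ.symm
    (by grind [List.nodup_cons, SimpleGraph.irrefl])

theorem hasCycleOfLength_six_of_adj_pages (h : IsSuspensionOfEdge G S a b c d) (hx : x ∉ S)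
    {p q : V} (hp : p ∈ S) (hpa : p ≠ a) (hpb : p ≠ b) (hpc : p ≠ c) (hpd : p ≠ d)
    (hq : q ∈ S) (hqa : q ≠ a) (hqb : q ≠ b) (hqc : q ≠ c) (hqd : q ≠ d) (hpq : p ≠ q)
    (hxp : G.Adj x p) (hxq : G.Adj x q) : HasCycleOfLength G 6 := by
  obtain ⟨ha, hb, hc, hd, hab, hnab, hcd, hac, had, hbc, hbd, -⟩ := id h
  obtain ⟨-, -, hpa', -⟩ := adj_of_nbhdIn_eq_pair (h.nbhdIn_page p hp hpa hpb hpc hpd)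
  obtain ⟨-, -, -, hqb'⟩ := adj_of_nbhdIn_eq_pair (h.nbhdIn_page q hq hqa hqb hqc hqd)
  exact hasCycleOfLength_six hxp hpa' hac hbc.symm hqb'.symm hxq.symm
    (by grind [List.nodup_cons, SimpleGraph.irrefl])

theorem hasCycleOfLength_six_of_adj (h : IsSuspensionOfEdge G S a b c d) (hx : x ∉ S)
    {α β : V} (hα : α ∈ S) (hβ : β ∈ S) (hαβ : α ≠ β) (hpoles : ({α, β} : Finset V) ≠ {a, b})
    (hxα : G.Adj x α) (hxβ : G.Adj x β) : HasCycleOfLength G 6 := by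
  by_cases hαa : α = a
  · subst hαa
    exact h.hasCycleOfLength_six_of_adj_pole hx hβ hαβ.symm (by rintro rfl; exact hpoles rfl)
      hxα hxβ
  by_cases hαb : α = b
  · subst hαb
    exact h.swap_poles.hasCycleOfLength_six_of_adj_pole hx hβ hαβ.symm
      (by rintro rfl; exact hpoles (pair_comm _ _)) hxα hxβ
  by_cases hβa : β = a
  · exact h.hasCycleOfLength_six_of_adj_pole hx hα hαa hαb (hβa ▸ hxβ) hxα
  by_cases hβb : β = b
  · exact h.swap_poles.hasCycleOfLength_six_of_adj_pole hx hα hαb hαa (hβb ▸ hxβ) hxα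
  by_cases hαc : α = c
  · exact h.hasCycleOfLength_six_of_adj_end hx hβ hβa hβb (hαc ▸ hαβ.symm) (hαc ▸ hxα) hxβ
  by_cases hαd : α = d
  · exact h.swap_ends.hasCycleOfLength_six_of_adj_end hx hβ hβa hβb (hαd ▸ hαβ.symm)
      (hαd ▸ hxα) hxβ
  by_cases hβc : β = c
  · exact h.hasCycleOfLength_six_of_adj_end hx hα hαa hαb (hβc ▸ hαβ) (hβc ▸ hxβ) hxα
  by_cases hβd : β = d
  · exact h.swap_ends.hasCycleOfLength_six_of_adj_end hx hα hαa hαb (hβd ▸ hαβ) (hβd ▸ hxβ) hxα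
  exact h.hasCycleOfLength_six_of_adj_pages hx hα hαa hαb hαc hαd hβ hβa hβb hβc hβd hαβ hxα hxβ

theorem insert (h : IsSuspensionOfEdge G S a b c d) {v : V} (hv : v ∉ S) {α β : V}
    (hαβ : α ≠ β) (hN : nbhdIn G S v = {α, β}) :
    HasCycleOfLength G 6 ∨ IsConeOrSuspension G (insert v S) := by
  obtain ⟨hα, hβ, hvα, hvβ⟩ := adj_of_nbhdIn_eq_pair hN
  by_cases hpoles : ({α, β} : Finset V) = {a, b}
  · rw [hpoles] at hN
    obtain ⟨ha, hb, hc, hd, hab, hnab, hcd, hac, had, hbc, hbd, hpage, e, he, hea, heb, hec, hed⟩ :=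
      h
    refine .inr (.inr ⟨a, b, c, d, mem_insert_of_mem ha, mem_insert_of_mem hb,
      mem_insert_of_mem hc, mem_insert_of_mem hd, hab, hnab, hcd, hac, had, hbc, hbd,
      fun u hu hua hub huc hud => ?_, ⟨e, mem_insert_of_mem he, hea, heb, hec, hed⟩⟩)
    rcases mem_insert.1 hu with rfl | hu
    · rw [nbhdIn_insert_self, hN]
    · rw [nbhdIn_insert_of_ne hN hu hua hub]
      exact hpage u hu hua hub huc hud
  · exact .inl (h.hasCycleOfLength_six_of_adj hv hα hβ hαβ hpoles hvα hvβ)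

end IsSuspensionOfEdge

theorem IsConeOrSuspension.insert {S : Finset V} (h : IsConeOrSuspension G S) {v α β : V}
    (hv : v ∉ S) (hαβ : α ≠ β) (hN : nbhdIn G S v = {α, β}) :
    HasCycleOfLength G 6 ∨ IsConeOrSuspension G (insert v S) := by
  rcases h with ⟨r, s, t, h⟩ | ⟨a, b, c, d, h⟩
  exacts [h.insert hv hαβ hN, h.insert hv hαβ hN]

theorem IsTwoDegenerate.hasCycleOfLength_six_or_isConeOrSuspension {S : Finset V}
    (h : IsTwoDegenerate G S) (ht : IsTight G S) (hS : 3 ≤ #S) :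
    HasCycleOfLength G 6 ∨ IsConeOrSuspension G S := by
  induction S using Finset.strongInduction with
  | H S ih =>
    obtain ⟨v, T, hv, rfl, hvN, hT⟩ := h.exists_insert_of_isTight ht hS
    obtain ⟨α, β, hαβ, hN⟩ := card_eq_two.1 hvN
    rw [card_insert_of_notMem hv] at hS
    by_cases hT2 : #T = 2
    · have hTN : nbhdIn G T v = T :=
        eq_of_subset_of_card_le (filter_subset _ _) (by rw [hT2, hvN])
      rw [hN] at hTN
      subst hTN
      obtain ⟨-, -, hvα, hvβ⟩ := adj_of_nbhdIn_eq_pair hN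
      refine .inr (.inl ⟨v, α, β, mem_insert_self _ _, by simp, by simp, hvα, hvβ,
        adj_of_isTight_pair hαβ hT, fun u hu huv huα huβ => ?_⟩)
      simp [huv, huα, huβ] at hu
    rcases ih T (ssubset_insert hv) (h.mono (subset_insert v T)) hT (by omega) with hC | hT
    exacts [.inl hC, hT.insert hv hαβ hN]

section Fintype

variable [Fintype V] {x : V}

theorem IsConeOverDoubleStar.hasCycleOfLength_six_of_univ_erase {r s t : V}
    (h : IsConeOverDoubleStar G (univ.erase x) r s t) (hdeg : ∀ u, 3 ≤ G.degree u)
    (hn : 6 ≤ Fintype.card V) : HasCycleOfLength G 6 := by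
  have hleaves : 1 < #(univ.erase x \ {r, s, t}) := by
    have hsdiff := le_card_sdiff {r, s, t} (univ.erase x)
    have : #({r, s, t} : Finset V) ≤ 3 := card_le_three
    rw [card_erase_of_mem (mem_univ x), card_univ] at hsdiff
    omega
  obtain ⟨q, hq, w, hw, hqw⟩ := one_lt_card.1 hleaves
  simp only [mem_sdiff, mem_insert, mem_singleton, not_or] at hq hw
  obtain ⟨hq, hqr, hqs, hqt⟩ := hq
  obtain ⟨hw, hwr, hws, hwt⟩ := hw
  have hadj : ∀ u ∈ univ.erase x, u ≠ r → u ≠ s → u ≠ t → G.Adj x u := fun u hu hr hs ht =>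
    .symm <| adj_of_card_nbhdIn_lt_degree <| by
      rcases h.nbhdIn_leaf u hu hr hs ht with hN | hN <;>
        exact hN ▸ card_le_two.trans_lt (hdeg u)
  exact h.hasCycleOfLength_six_of_adj_leaves (notMem_erase x univ) hq hqr hqs hqt
    hw hwr hws hwt hqw (hadj q hq hqr hqs hqt) (hadj w hw hwr hws hwt)

theorem IsSuspensionOfEdge.hasCycleOfLength_six_of_univ_erase {a b c d : V}
    (h : IsSuspensionOfEdge G (univ.erase x) a b c d) (hdeg : ∀ u, 3 ≤ G.degree u) :
    HasCycleOfLength G 6 := by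
  obtain ⟨e, he, hea, heb, hec, hed⟩ := h.exists_page
  have hxe : G.Adj x e := .symm <| adj_of_card_nbhdIn_lt_degree <| by
    rw [h.nbhdIn_page e he hea heb hec hed]
    exact card_le_two.trans_lt (hdeg e)
  have hx : 1 < #(G.neighborFinset x) := by
    rw [card_neighborFinset_eq_degree]
    linarith [hdeg x]
  obtain ⟨y, hy, hye⟩ := exists_mem_ne hx e
  rw [mem_neighborFinset] at hy
  refine h.hasCycleOfLength_six_of_adj (notMem_erase x univ) he
    (mem_erase.2 ⟨hy.ne', mem_univ y⟩) hye.symm (fun hpoles => ?_) hxe hy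
  have he' := hpoles ▸ mem_insert_self e {y}
  rw [mem_insert, mem_singleton] at he'
  exact he'.elim hea heb

end Fintype

/-- Every degree 3-critical graph on `n ≥ 6` vertices contains
a cycle of length 6. -/
theorem degree_three_critical_has_C6 {V : Type} [Fintype V]
    (G : SimpleGraph V) (hn : 6 ≤ Fintype.card V)
    (hG : DegreeThreeCritical G) :
    HasCycleOfLength G 6 := by
  classical
  have hdeg := hG.three_le_degree (by omega)
  obtain ⟨x, hx⟩ := hG.exists_degree_eq_three (by omega)
  have hS : 3 ≤ #(univ.erase x) := by
    rw [card_erase_of_mem (mem_univ x), card_univ]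
    omega
  have hdegenerate := hG.isTwoDegenerate (erase_ssubset (mem_univ x)).ne
  rcases hdegenerate.hasCycleOfLength_six_or_isConeOrSuspension (hG.isTight_univ_erase hx) hS
    with hC | ⟨r, s, t, h⟩ | ⟨a, b, c, d, h⟩
  · exact hC
  · exact h.hasCycleOfLength_six_of_univ_erase hdeg hn
  · exact h.hasCycleOfLength_six_of_univ_erase hdeg
end
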